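/- arXiv:2503.10972 — 12 statements merged into one kernel-verified Lean document; each statement's English description precedes it below -/
import Mathlib

section
/- Weak duality for facility location with uniform opening cost f: let f ≥ 0 and let α : D → ℝ satisfy Σ_{j∈D} [α_j − d(i,j)]⁺ ≤ f for every center i ∈ F. Then for every nonempty subset T ⊆ F one has Σ_{j∈D} α_j ≤ Σ_{j∈D} d(j,T) + f·|T|. -/
open Finset

/-- `d(p,S)`: the distance from a point `p` to the closest point of the finite set `S`
(junk value `0` if `S` is empty). -/
noncomputable def dS {X : Type*} [MetricSpace X] (p : X) (S : Finset X) : ℝ :=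
  if h : S.Nonempty then S.inf' h (fun c => dist p c) else 0

/-- Weak duality for facility location with uniform opening cost `f`:
if `α : D → ℝ` satisfies `Σ_{j∈D} [α_j − d(i,j)]⁺ ≤ f` for every center `i ∈ F`,
then for every nonempty `T ⊆ F`,
`Σ_{j∈D} α_j ≤ Σ_{j∈D} d(j,T) + f·|T|`. -/
theorem facility_location_weak_duality {X : Type*} [MetricSpace X]
    (D F : Finset X) (hD : D.Nonempty) (hF : F.Nonempty)
    (f : ℝ) (hf : 0 ≤ f) (α : X → ℝ)
    (hdual : ∀ i ∈ F, ∑ j ∈ D, max (α j - dist i j) 0 ≤ f) :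
    ∀ T : Finset X, T ⊆ F → T.Nonempty →
      ∑ j ∈ D, α j ≤ (∑ j ∈ D, dS j T) + f * T.card := by
  intro T hTF hT
  have key : ∀ j ∈ D, α j ≤ dS j T + ∑ i ∈ T, max (α j - dist i j) 0 := by
    intro j _
    obtain ⟨i₀, hi₀, hmin⟩ := T.exists_mem_eq_inf' hT (fun c => dist j c)
    have hds : dS j T = dist j i₀ := by simp [dS, hT, hmin]
    have h1 : α j ≤ dS j T + max (α j - dist i₀ j) 0 := by
      rw [hds, dist_comm]
      have := le_max_left (α j - dist i₀ j) 0
      linarith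
    refine h1.trans ?_
    have h2 : max (α j - dist i₀ j) 0 ≤ ∑ i ∈ T, max (α j - dist i j) 0 :=
      Finset.single_le_sum (f := fun i => max (α j - dist i j) 0) (fun i _ => le_max_right _ 0) hi₀
    linarith
  calc ∑ j ∈ D, α j ≤ ∑ j ∈ D, (dS j T + ∑ i ∈ T, max (α j - dist i j) 0) :=
        Finset.sum_le_sum key
    _ = (∑ j ∈ D, dS j T) + ∑ i ∈ T, ∑ j ∈ D, max (α j - dist i j) 0 := by
        rw [Finset.sum_add_distrib, Finset.sum_comm]
    _ ≤ (∑ j ∈ D, dS j T) + ∑ i ∈ T, f := by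
        gcongr with i hi; exact hdual i (hTF hi)
    _ = (∑ j ∈ D, dS j T) + f * T.card := by
        rw [Finset.sum_const, nsmul_eq_mul, mul_comm]
end

section
/- k-median lower bound from a feasible facility-location dual: let f ≥ 0, let k be an integer with 1 ≤ k ≤ |F|, and let α : D → ℝ satisfy Σ_{j∈D} [α_j − d(i,j)]⁺ ≤ f for every i ∈ F. Then every nonempty T ⊆ F with |T| ≤ k satisfies Σ_{j∈D} d(j,T) ≥ Σ_{j∈D} α_j − k·f; in particular opt_k ≥ Σ_{j∈D} α_j − k·f. -/
open Finset

/-- `cost(S) = Σ_{p∈D} d(p,S)`. -/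
noncomputable def kmCost {X : Type*} [MetricSpace X] (D S : Finset X) : ℝ :=
  ∑ p ∈ D, dS p S

/-- `opt_k = min{cost(T) : T ⊆ F, |T| = k}`. -/
noncomputable def kmOpt {X : Type*} [MetricSpace X] (D F : Finset X) (k : ℕ) : ℝ :=
  sInf {c : ℝ | ∃ T : Finset X, T ⊆ F ∧ T.card = k ∧ kmCost D T = c}

/-- k-median lower bound from a feasible facility-location dual:
if `α` satisfies `Σ_{j∈D} [α_j − d(i,j)]⁺ ≤ f` for every `i ∈ F`, then every nonempty
`T ⊆ F` with `|T| ≤ k` satisfies `Σ_{j∈D} d(j,T) ≥ Σ_{j∈D} α_j − k·f`;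
in particular `opt_k ≥ Σ_{j∈D} α_j − k·f`. -/
theorem kmedian_dual_lower_bound {X : Type*} [MetricSpace X]
    (D F : Finset X) (hD : D.Nonempty) (hF : F.Nonempty)
    (f : ℝ) (hf : 0 ≤ f) (k : ℕ) (hk1 : 1 ≤ k) (hk2 : k ≤ F.card)
    (α : X → ℝ)
    (hdual : ∀ i ∈ F, ∑ j ∈ D, max (α j - dist i j) 0 ≤ f) :
    (∀ T : Finset X, T ⊆ F → T.Nonempty → T.card ≤ k →
      (∑ j ∈ D, α j) - k * f ≤ ∑ j ∈ D, dS j T) ∧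
    (∑ j ∈ D, α j) - k * f ≤ kmOpt D F k := by
  have main : ∀ T : Finset X, T ⊆ F → T.Nonempty → T.card ≤ k →
      (∑ j ∈ D, α j) - k * f ≤ ∑ j ∈ D, dS j T := by
    intro T hTF hT hTk
    have key : ∀ j ∈ D, α j - dS j T ≤ ∑ i ∈ T, max (α j - dist j i) 0 := by
      intro j _
      have hds : dS j T = T.inf' hT (fun c => dist j c) := by
        simp [dS, hT]
      obtain ⟨i, hiT, hi⟩ := Finset.exists_mem_eq_inf' hT (fun c => dist j c)
      calc α j - dS j T ≤ max (α j - dist j i) 0 := by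
            rw [hds, hi]; exact le_max_left _ _
        _ ≤ ∑ i ∈ T, max (α j - dist j i) 0 :=
            Finset.single_le_sum (f := fun i => max (α j - dist j i) 0)
              (fun i _ => le_max_right _ _) hiT
    have h1 : ∑ j ∈ D, (α j - dS j T) ≤ ∑ j ∈ D, ∑ i ∈ T, max (α j - dist j i) 0 :=
      Finset.sum_le_sum key
    rw [Finset.sum_comm] at h1
    have h2 : ∑ i ∈ T, ∑ j ∈ D, max (α j - dist j i) 0 ≤ T.card * f := by
      have := Finset.sum_le_sum (s := T) (g := fun _ => f)
        (fun i hi => by simpa [dist_comm] using hdual i (hTF hi))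
      simpa [nsmul_eq_mul, dist_comm] using this
    have h3 : (T.card : ℝ) * f ≤ k * f := by
      apply mul_le_mul_of_nonneg_right _ hf
      exact_mod_cast hTk
    have := h1.trans (h2.trans h3)
    linarith [Finset.sum_sub_distrib (s := D) (f := α) (g := fun j => dS j T) ▸ this]
  refine ⟨main, ?_⟩
  obtain ⟨T, hTF, hTcard⟩ := Finset.exists_subset_card_eq hk2
  have hne : {c : ℝ | ∃ T : Finset X, T ⊆ F ∧ T.card = k ∧ kmCost D T = c}.Nonempty :=
    ⟨kmCost D T, T, hTF, hTcard, rfl⟩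
  apply le_csInf hne
  rintro c ⟨T', hT'F, hT'card, rfl⟩
  have hT'ne : T'.Nonempty := Finset.card_pos.mp (by omega)
  exact main T' hT'F hT'ne (le_of_eq hT'card)
end

section
/- Static form of the LMP 2/(1−δ)-approximation guarantee: let δ ∈ [0,1), f ≥ 0, let S ⊆ F be nonempty, and let α : D → ℝ satisfy (i) Σ_{j∈D} α_j ≥ (1−δ)·Σ_{j∈D} d(j,S) + 2f·|S|, and (ii) Σ_{j∈D} [α_j − 2·d(i,j)]⁺ ≤ 2f for every i ∈ F. Then for every nonempty T ⊆ F, (1−δ)·Σ_{j∈D} d(j,S) ≤ 2·( Σ_{j∈D} d(j,T) + f·|T| − f·|S| ). In particular, if |S| = k with 1 ≤ k ≤ |F|, then cost(S) ≤ (2/(1−δ))·opt_k. -/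
open Finset

/-!
Weak duality for the facility-location relaxation: each client `j` is served in `T` by its
nearest center `i`, so `α j ≤ 2 d(j,T) + [α j − 2 d(i,j)]⁺`; summing over clients and using
dual feasibility at each center of `T` gives `Σ α ≤ 2·cost(T) + 2f·|T|`, which together
with the payment condition is the first claim. Taking `|T| = |S| = k` the opening costs
cancel, and minimising over `T` gives the bound against `opt_k`.
-/

section

variable {X : Type*} [MetricSpace X]

theorem exists_mem_dS_eq (p : X) {T : Finset X} (hT : T.Nonempty) :
    ∃ i ∈ T, dS p T = dist p i := by
  simpa only [dS, dif_pos hT] using T.exists_mem_eq_inf' hT (dist p)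

theorem le_two_mul_dS_add_sum_excess (a : ℝ) (j : X) {T : Finset X} (hT : T.Nonempty) :
    a ≤ 2 * dS j T + ∑ i ∈ T, max (a - 2 * dist i j) 0 := by
  obtain ⟨i, hi, hdi⟩ := exists_mem_dS_eq j hT
  have hexcess : max (a - 2 * dist i j) 0 ≤ ∑ i ∈ T, max (a - 2 * dist i j) 0 :=
    single_le_sum (f := fun i => max (a - 2 * dist i j) 0) (fun _ _ => le_max_right _ _) hi
  linarith [le_max_left (a - 2 * dist i j) 0, dist_comm i j]

theorem sum_le_two_mul_cost_add_opening (D : Finset X) {T : Finset X} (hT : T.Nonempty)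
    (f : ℝ) (α : X → ℝ)
    (hdual : ∀ i ∈ T, ∑ j ∈ D, max (α j - 2 * dist i j) 0 ≤ 2 * f) :
    ∑ j ∈ D, α j ≤ 2 * ∑ j ∈ D, dS j T + 2 * f * T.card :=
  calc ∑ j ∈ D, α j
      ≤ ∑ j ∈ D, (2 * dS j T + ∑ i ∈ T, max (α j - 2 * dist i j) 0) :=
        sum_le_sum fun j _ => le_two_mul_dS_add_sum_excess (α j) j hT
    _ = 2 * ∑ j ∈ D, dS j T + ∑ i ∈ T, ∑ j ∈ D, max (α j - 2 * dist i j) 0 := by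
        rw [sum_add_distrib, mul_sum, sum_comm]
    _ ≤ 2 * ∑ j ∈ D, dS j T + ∑ _i ∈ T, 2 * f := by
        gcongr with i hi
        exact hdual i hi
    _ = 2 * ∑ j ∈ D, dS j T + 2 * f * T.card := by
        rw [sum_const, nsmul_eq_mul]
        ring

theorem le_kmOpt {D F S : Finset X} {k : ℕ} {c : ℝ}
    (hSF : S ⊆ F) (hSk : S.card = k)
    (hc : ∀ T ⊆ F, T.card = k → c ≤ kmCost D T) : c ≤ kmOpt D F k :=
  le_csInf ⟨kmCost D S, S, hSF, hSk, rfl⟩ fun _ ⟨T, hTF, hTk, hTc⟩ => hTc ▸ hc T hTF hTk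

end

theorem lmp_static_guarantee_general {X : Type*} [MetricSpace X]
    (D F S : Finset X)
    (hSF : S ⊆ F)
    (δ f : ℝ) (hδ1 : δ < 1) (α : X → ℝ)
    (hpay : (1 - δ) * (∑ j ∈ D, dS j S) + 2 * f * S.card ≤ ∑ j ∈ D, α j)
    (hdual : ∀ i ∈ F, ∑ j ∈ D, max (α j - 2 * dist i j) 0 ≤ 2 * f) :
    (∀ T : Finset X, T ⊆ F → T.Nonempty →
      (1 - δ) * (∑ j ∈ D, dS j S) ≤
        2 * ((∑ j ∈ D, dS j T) + f * T.card - f * S.card)) ∧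
    (∀ k : ℕ, 1 ≤ k → k ≤ F.card → S.card = k →
      kmCost D S ≤ (2 / (1 - δ)) * kmOpt D F k) := by
  have hcompare : ∀ T : Finset X, T ⊆ F → T.Nonempty →
      (1 - δ) * (∑ j ∈ D, dS j S) ≤
        2 * ((∑ j ∈ D, dS j T) + f * T.card - f * S.card) := fun T hTF hT => by
    linarith [sum_le_two_mul_cost_add_opening D hT f α fun i hi => hdual i (hTF hi)]
  refine ⟨hcompare, fun k hk _ hSk => ?_⟩
  have hopt : (1 - δ) * kmCost D S / 2 ≤ kmOpt D F k := by
    refine le_kmOpt hSF hSk fun T hTF hTk => ?_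
    have hT : T.Nonempty := card_pos.mp (by omega)
    have := hcompare T hTF hT
    rw [hSk, hTk] at this
    unfold kmCost
    linarith
  rw [div_mul_eq_mul_div, le_div_iff₀ (by linarith)]
  linarith

/-- Static form of the LMP `2/(1−δ)`-approximation guarantee: if the dual values `α`
pay for the `(1−δ)`-scaled connection cost of `S` plus its opening cost `2f·|S|`, and
`α/2` is a feasible dual for opening cost `f` after doubling distances, then for every
nonempty `T ⊆ F` one has `(1−δ)·cost(S) ≤ 2·(cost(T) + f·|T| − f·|S|)`;
in particular, if `|S| = k` with `1 ≤ k ≤ |F|` then `cost(S) ≤ (2/(1−δ))·opt_k`. -/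
theorem lmp_static_guarantee {X : Type*} [MetricSpace X]
    (D F S : Finset X) (hD : D.Nonempty) (hF : F.Nonempty)
    (hSF : S ⊆ F) (hSne : S.Nonempty)
    (δ f : ℝ) (hδ0 : 0 ≤ δ) (hδ1 : δ < 1) (hf : 0 ≤ f) (α : X → ℝ)
    (hpay : (1 - δ) * (∑ j ∈ D, dS j S) + 2 * f * S.card ≤ ∑ j ∈ D, α j)
    (hdual : ∀ i ∈ F, ∑ j ∈ D, max (α j - 2 * dist i j) 0 ≤ 2 * f) :
    (∀ T : Finset X, T ⊆ F → T.Nonempty →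
      (1 - δ) * (∑ j ∈ D, dS j S) ≤
        2 * ((∑ j ∈ D, dS j T) + f * T.card - f * S.card)) ∧
    (∀ k : ℕ, 1 ≤ k → k ≤ F.card → S.card = k →
      kmCost D S ≤ (2 / (1 - δ)) * kmOpt D F k) :=
  lmp_static_guarantee_general D F S hSF δ f hδ1 α hpay hdual
end

section
/- Summation step for dual feasibility of the greedy dual values: let J be a nonempty finite linearly ordered set, let α : J → ℝ, let w : J → ℝ with w_j ≥ 0 for all j, and let F ≥ 0. Suppose that for every k ∈ J, Σ_{j ≥ k} [α_k − w_j]⁺ + Σ_{j < k} [α_k − 2·w_j − w_k]⁺ ≤ F. Then Σ_{j∈J} (α_j − 2·w_j) ≤ F. -/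
open Finset

/-- Summation step for dual feasibility of the greedy dual values: if for every `k` in a
nonempty finite linearly ordered set `J`,
`Σ_{j ≥ k} [α_k − w_j]⁺ + Σ_{j < k} [α_k − 2w_j − w_k]⁺ ≤ F`,
then `Σ_{j∈J} (α_j − 2w_j) ≤ F`. -/
theorem greedy_dual_feasibility_summation {J : Type*} [Fintype J] [LinearOrder J] [Nonempty J]
    (α w : J → ℝ) (hw : ∀ j, 0 ≤ w j) (F : ℝ) (hF : 0 ≤ F)
    (h : ∀ k : J,
      (∑ j ∈ Finset.univ.filter (fun j => k ≤ j), max (α k - w j) 0) +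
      (∑ j ∈ Finset.univ.filter (fun j => j < k), max (α k - 2 * w j - w k) 0) ≤ F) :
    ∑ j, (α j - 2 * w j) ≤ F := by
  classical
  set n := Fintype.card J with hn
  have hn0 : 0 < n := Fintype.card_pos
  -- cardinality facts
  have hcardsplit : ∀ k : J,
      (univ.filter (fun j => k ≤ j)).card + (univ.filter (fun j => j < k)).card = n := by
    intro k
    simpa [not_le, Finset.card_univ] using
      Finset.card_filter_add_card_filter_not (s := (univ : Finset J))
        (p := fun j => k ≤ j)
  have hcardsplit2 : ∀ j : J,
      (univ.filter (fun k => j < k)).card + (univ.filter (fun k => k ≤ j)).card = n := by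
    intro j
    simpa [not_lt, Finset.card_univ] using
      Finset.card_filter_add_card_filter_not (s := (univ : Finset J))
        (p := fun k => j < k)
  have hcle : ∀ k : J,
      (univ.filter (fun j => j ≤ k)).card = (univ.filter (fun j => j < k)).card + 1 := by
    intro k
    have : (univ.filter (fun j => j ≤ k)) = insert k (univ.filter (fun j => j < k)) := by
      ext j
      simp [le_iff_lt_or_eq, or_comm]
    rw [this, Finset.card_insert_of_notMem (by simp)]
  -- raw inequality for each k
  have hraw : ∀ k : J,
      (n : ℝ) * α k - (∑ j ∈ univ.filter (fun j => k ≤ j), w j)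
        - 2 * (∑ j ∈ univ.filter (fun j => j < k), w j)
        - ((univ.filter (fun j => j < k)).card : ℝ) * w k ≤ F := by
    intro k
    have h1 : (∑ j ∈ univ.filter (fun j => k ≤ j), (α k - w j)) +
        (∑ j ∈ univ.filter (fun j => j < k), (α k - 2 * w j - w k)) ≤ F :=
      le_trans (add_le_add (Finset.sum_le_sum fun j _ => le_max_left _ _)
        (Finset.sum_le_sum fun j _ => le_max_left _ _)) (h k)
    have e1 : (∑ j ∈ univ.filter (fun j => k ≤ j), (α k - w j)) =
        ((univ.filter (fun j => k ≤ j)).card : ℝ) * α k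
          - ∑ j ∈ univ.filter (fun j => k ≤ j), w j := by
      rw [Finset.sum_sub_distrib, Finset.sum_const, nsmul_eq_mul]
    have e2 : (∑ j ∈ univ.filter (fun j => j < k), (α k - 2 * w j - w k)) =
        ((univ.filter (fun j => j < k)).card : ℝ) * α k
          - 2 * (∑ j ∈ univ.filter (fun j => j < k), w j)
          - ((univ.filter (fun j => j < k)).card : ℝ) * w k := by
      simp only [sub_sub]
      rw [Finset.sum_sub_distrib, Finset.sum_const, nsmul_eq_mul, Finset.sum_add_distrib,
        Finset.sum_const, nsmul_eq_mul, ← Finset.mul_sum]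
    have hc : ((univ.filter (fun j => k ≤ j)).card : ℝ)
        + ((univ.filter (fun j => j < k)).card : ℝ) = (n : ℝ) := by
      rw [← Nat.cast_add, hcardsplit k]
    rw [e1, e2] at h1
    have hca : ((univ.filter (fun j => k ≤ j)).card : ℝ) * α k
        + ((univ.filter (fun j => j < k)).card : ℝ) * α k = (n : ℝ) * α k := by
      rw [← add_mul, hc]
    linarith [h1, hca]
  -- sum over k
  have hsum : ∑ k : J, ((n : ℝ) * α k - (∑ j ∈ univ.filter (fun j => k ≤ j), w j)
        - 2 * (∑ j ∈ univ.filter (fun j => j < k), w j)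
        - ((univ.filter (fun j => j < k)).card : ℝ) * w k) ≤ (n : ℝ) * F := by
    calc _ ≤ ∑ _k : J, F := Finset.sum_le_sum fun k _ => hraw k
      _ = (n : ℝ) * F := by rw [Finset.sum_const, nsmul_eq_mul, Finset.card_univ]
  -- double sum swaps
  have swap1 : ∑ k : J, (∑ j ∈ univ.filter (fun j => k ≤ j), w j)
      = ∑ j : J, ((univ.filter (fun k => k ≤ j)).card : ℝ) * w j := by
    simp only [Finset.sum_filter]
    rw [Finset.sum_comm]
    refine Finset.sum_congr rfl fun j _ => ?_
    rw [← Finset.sum_filter, Finset.sum_const, nsmul_eq_mul]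
  have swap2 : ∑ k : J, (∑ j ∈ univ.filter (fun j => j < k), w j)
      = ∑ j : J, ((univ.filter (fun k => j < k)).card : ℝ) * w j := by
    simp only [Finset.sum_filter]
    rw [Finset.sum_comm]
    refine Finset.sum_congr rfl fun j _ => ?_
    rw [← Finset.sum_filter, Finset.sum_const, nsmul_eq_mul]
  -- rewrite the big sum
  have key : ∑ k : J, ((n : ℝ) * α k - (∑ j ∈ univ.filter (fun j => k ≤ j), w j)
        - 2 * (∑ j ∈ univ.filter (fun j => j < k), w j)
        - ((univ.filter (fun j => j < k)).card : ℝ) * w k)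
      = (n : ℝ) * (∑ j, α j) - (2 * (n : ℝ) - 1) * (∑ j, w j) := by
    simp only [Finset.sum_sub_distrib, ← Finset.mul_sum]
    rw [swap1, swap2]
    have : ∀ j : J,
        ((univ.filter (fun k => k ≤ j)).card : ℝ) * w j
          + 2 * (((univ.filter (fun k => j < k)).card : ℝ) * w j)
          + ((univ.filter (fun k => k < j)).card : ℝ) * w j
        = (2 * (n : ℝ) - 1) * w j := by
      intro j
      have h2 : ((univ.filter (fun k => j < k)).card : ℝ)
          + ((univ.filter (fun k => k ≤ j)).card : ℝ) = (n : ℝ) := by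
        rw [← Nat.cast_add, hcardsplit2 j]
      have h3 : ((univ.filter (fun k => k ≤ j)).card : ℝ)
          = ((univ.filter (fun k => k < j)).card : ℝ) + 1 := by
        rw [← Nat.cast_add_one, hcle j]
      linear_combination 2 * w j * h2 - w j * h3
    have hall : ∑ j : J, (((univ.filter (fun k => k ≤ j)).card : ℝ) * w j
          + 2 * (((univ.filter (fun k => j < k)).card : ℝ) * w j)
          + ((univ.filter (fun k => k < j)).card : ℝ) * w j)
        = ∑ j : J, (2 * (n : ℝ) - 1) * w j := Finset.sum_congr rfl fun j _ => this j
    simp only [Finset.sum_add_distrib, ← Finset.mul_sum] at hall ⊢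
    linarith [hall]
  rw [key] at hsum
  have hW : 0 ≤ ∑ j, w j := Finset.sum_nonneg fun j _ => hw j
  have hn1 : (1 : ℝ) ≤ (n : ℝ) := by exact_mod_cast hn0
  have hgoal : ∑ j, (α j - 2 * w j) = (∑ j, α j) - 2 * (∑ j, w j) := by
    rw [Finset.sum_sub_distrib, ← Finset.mul_sum]
  rw [hgoal]
  nlinarith [hsum, hW, hn1, hF]
end

section
/- Counting lemma for dual feasibility with active and inactive clients: let J be a nonempty finite linearly ordered set partitioned into sets I and A such that every element of I precedes every element of A. Let α : J → ℝ, let w : J → ℝ with w_j ≥ 0 for all j, and let F ≥ 0. Suppose: (i) for every k ∈ A, Σ_{j∈A} [α_j − w_j]⁺ + Σ_{j∈I} [α_k − 2·w_j − w_k]⁺ ≤ F; and (ii) for every k ∈ I, Σ_{j ≥ k} [α_k − w_j]⁺ + Σ_{j < k} [α_k − 2·w_j − w_k]⁺ ≤ F. Then Σ_{j∈J} (α_j − 2·w_j) ≤ F. -/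
/-!
Sum the constraint of row `k` over all `k` and drop the positive parts. Row `k` is then at least
`∑ j, (a k j - c k j)`, where `a = rowAlpha A α` is `α j` on `A × A` and `α k` elsewhere, and
`c k j = rowCost w k j = w j + [j < k] (w j + w k)` (on `A × A` this only over-counts, as `w ≥ 0`).
On `A × A` the totals of `α j` and of `α k` agree, so `∑ a = n ∑ α`; each pair `j ≠ k`
contributes `w j + w k` to the bracketed part of `∑ c` exactly once, so `∑ c ≤ 2 n ∑ w`.
Hence `n ∑ (α - 2 w) ≤ n F`.
-/

open Finset

section
variable {J : Type*} [Fintype J] [LinearOrder J]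

theorem sum_sum_ite_lt_add_eq_sum_sum_ite_ne {M : Type*} [AddCommMonoid M] (f : J → M) :
    ∑ k, ∑ j, (if j < k then f j + f k else 0) = ∑ k, ∑ j, if j ≠ k then f j else 0 := by
  have hsplit : ∀ k j, (if j < k then f j + f k else 0) =
      (if j < k then f j else 0) + (if j < k then f k else 0) := by
    intro k j; split_ifs <;> simp
  simp_rw [hsplit, sum_add_distrib]
  rw [sum_comm (f := fun k j => if j < k then f k else 0), ← sum_add_distrib]
  refine sum_congr rfl fun k _ => ?_
  rw [← sum_add_distrib]
  refine sum_congr rfl fun j _ => ?_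
  rcases lt_trichotomy j k with h | rfl | h
  · simp [h, h.ne, not_lt_of_gt h]
  · simp
  · simp [h, h.ne', not_lt_of_gt h]

def rowCost (w : J → ℝ) (k j : J) : ℝ := w j + if j < k then w j + w k else 0

theorem sum_sum_rowCost_le {w : J → ℝ} (hw : ∀ j, 0 ≤ w j) :
    ∑ k, ∑ j, rowCost w k j ≤ 2 * Fintype.card J * ∑ j, w j := by
  have hoff : ∑ k, ∑ j, (if j < k then w j + w k else 0) ≤ Fintype.card J * ∑ j, w j := by
    rw [sum_sum_ite_lt_add_eq_sum_sum_ite_ne]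
    calc ∑ k : J, ∑ j, (if j ≠ k then w j else 0) ≤ ∑ _k : J, ∑ j, w j :=
          sum_le_sum fun k _ => sum_le_sum fun j _ => by split_ifs <;> simp [hw j]
      _ = Fintype.card J * ∑ j, w j := by simp
  simp only [rowCost, sum_add_distrib, sum_const, card_univ, nsmul_eq_mul] at hoff ⊢
  linarith

def rowAlpha (A : Finset J) (α : J → ℝ) (k j : J) : ℝ := if k ∈ A ∧ j ∈ A then α j else α k

theorem sum_sum_rowAlpha (A : Finset J) (α : J → ℝ) :
    ∑ k, ∑ j, rowAlpha A α k j = Fintype.card J * ∑ j, α j := by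
  have hshift : ∀ k j, rowAlpha A α k j = α k + if k ∈ A ∧ j ∈ A then α j - α k else 0 := by
    intro k j; unfold rowAlpha; split_ifs <;> ring
  simp_rw [hshift, sum_add_distrib, ite_and]
  simp [sum_ite_mem, mul_sum]

theorem sum_rowAlpha_sub_rowCost_le_of_mem {I A : Finset J} (hunion : I ∪ A = univ)
    (hdisj : Disjoint I A) (horder : ∀ i ∈ I, ∀ a ∈ A, i < a) {α w : J → ℝ}
    (hw : ∀ j, 0 ≤ w j) {k : J} (hk : k ∈ A) :
    ∑ j, (rowAlpha A α k j - rowCost w k j) ≤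
      (∑ j ∈ A, max (α j - w j) 0) + ∑ j ∈ I, max (α k - 2 * w j - w k) 0 := by
  rw [← hunion, sum_union hdisj, add_comm]
  gcongr with j hj j hj
  · simp only [rowAlpha, rowCost, hk, hj, and_self, if_true]
    refine le_max_of_le_left ?_
    split_ifs <;> linarith [hw j, hw k]
  · have hjk : j < k := horder j hj k hk
    have hjA : j ∉ A := disjoint_left.mp hdisj hj
    simp only [rowAlpha, rowCost, hjA, and_false, if_false, hjk, if_true]
    exact le_max_of_le_left (by linarith)

theorem sum_rowAlpha_sub_rowCost_le_of_notMem {A : Finset J} {α w : J → ℝ} {k : J} (hk : k ∉ A) :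
    ∑ j, (rowAlpha A α k j - rowCost w k j) ≤
      (∑ j ∈ univ.filter (fun j => k ≤ j), max (α k - w j) 0) +
        ∑ j ∈ univ.filter (fun j => j < k), max (α k - 2 * w j - w k) 0 := by
  have hlt : univ.filter (fun j => ¬k ≤ j) = univ.filter (fun j => j < k) := by
    simp only [not_le]
  rw [← sum_filter_add_sum_filter_not univ (fun j => k ≤ j), hlt]
  gcongr with j hj j hj <;> rw [mem_filter] at hj
  · simp only [rowAlpha, rowCost, hk, false_and, if_false, not_lt.mpr hj.2]
    exact le_max_of_le_left (by linarith)
  · simp only [rowAlpha, rowCost, hk, false_and, if_false, hj.2, if_true]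
    exact le_max_of_le_left (by linarith)

end

theorem active_inactive_dual_feasibility_general {J : Type*} [Fintype J] [LinearOrder J] [Nonempty J]
    (I A : Finset J) (hunion : I ∪ A = Finset.univ) (hdisj : Disjoint I A)
    (horder : ∀ i ∈ I, ∀ a ∈ A, i < a)
    (α w : J → ℝ) (hw : ∀ j, 0 ≤ w j) (F : ℝ)
    (hA : ∀ k ∈ A,
      (∑ j ∈ A, max (α j - w j) 0) +
      (∑ j ∈ I, max (α k - 2 * w j - w k) 0) ≤ F)
    (hI : ∀ k ∈ I,
      (∑ j ∈ Finset.univ.filter (fun j => k ≤ j), max (α k - w j) 0) +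
      (∑ j ∈ Finset.univ.filter (fun j => j < k), max (α k - 2 * w j - w k) 0) ≤ F) :
    ∑ j, (α j - 2 * w j) ≤ F := by
  have hrow : ∀ k, ∑ j, (rowAlpha A α k j - rowCost w k j) ≤ F := by
    intro k
    by_cases hk : k ∈ A
    · exact (sum_rowAlpha_sub_rowCost_le_of_mem hunion hdisj horder hw hk).trans (hA k hk)
    · have hkI : k ∈ I := by simpa [hk] using hunion.ge (mem_univ k)
      exact (sum_rowAlpha_sub_rowCost_le_of_notMem hk).trans (hI k hkI)
  have hn : (0 : ℝ) < Fintype.card J := by exact_mod_cast Fintype.card_pos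
  refine le_of_mul_le_mul_left ?_ hn
  calc (Fintype.card J : ℝ) * ∑ j, (α j - 2 * w j)
      = ∑ k, ∑ j, rowAlpha A α k j - 2 * Fintype.card J * ∑ j, w j := by
        rw [sum_sum_rowAlpha, sum_sub_distrib, ← mul_sum]; ring
    _ ≤ ∑ k, ∑ j, rowAlpha A α k j - ∑ k, ∑ j, rowCost w k j := by
        linarith [sum_sum_rowCost_le hw]
    _ = ∑ k, ∑ j, (rowAlpha A α k j - rowCost w k j) := by simp only [sum_sub_distrib]
    _ ≤ ∑ _k : J, F := sum_le_sum fun k _ => hrow k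
    _ = Fintype.card J * F := by simp

/-- Counting lemma for dual feasibility with active and inactive clients: let the nonempty
finite linearly ordered set `J` be partitioned into `I` and `A` with every element of `I`
preceding every element of `A`. If
(i) for every `k ∈ A`, `Σ_{j∈A} [α_j − w_j]⁺ + Σ_{j∈I} [α_k − 2w_j − w_k]⁺ ≤ F`, and
(ii) for every `k ∈ I`, `Σ_{j ≥ k} [α_k − w_j]⁺ + Σ_{j < k} [α_k − 2w_j − w_k]⁺ ≤ F`,
then `Σ_{j∈J} (α_j − 2w_j) ≤ F`. -/
theorem active_inactive_dual_feasibility {J : Type*} [Fintype J] [LinearOrder J] [Nonempty J]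
    (I A : Finset J) (hunion : I ∪ A = Finset.univ) (hdisj : Disjoint I A)
    (horder : ∀ i ∈ I, ∀ a ∈ A, i < a)
    (α w : J → ℝ) (hw : ∀ j, 0 ≤ w j) (F : ℝ) (hF : 0 ≤ F)
    (hA : ∀ k ∈ A,
      (∑ j ∈ A, max (α j - w j) 0) +
      (∑ j ∈ I, max (α k - 2 * w j - w k) 0) ≤ F)
    (hI : ∀ k ∈ I,
      (∑ j ∈ Finset.univ.filter (fun j => k ≤ j), max (α k - w j) 0) +
      (∑ j ∈ Finset.univ.filter (fun j => j < k), max (α k - 2 * w j - w k) 0) ≤ F) :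
    ∑ j, (α j - 2 * w j) ≤ F :=
  active_inactive_dual_feasibility_general I A hunion hdisj horder α w hw F hA hI
end

section
/- Local search with single swaps is a 5-approximation for k-median: let k be an integer with 1 ≤ k ≤ |F| and let S ⊆ F with |S| = k be locally optimal under single swaps, i.e., for every c ∈ S and every c' ∈ F, cost((S − {c}) ∪ {c'}) ≥ cost(S). Then cost(S) ≤ 5·opt_k. -/
open Finset

/-!
Arya et al.: let `O` be an optimal solution. Pair every `o ∈ O` with a center `π o ∈ S` such that
no other optimal center has `π o` as its nearest `S`-center, and no center of `S` is used more than
twice (`exists_swap_pairing`). In the swap `π o ↦ o`, the clients served by `o` in `O` move to `o`,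
and the clients of `π o` move to the `S`-center nearest to their `O`-center, at extra cost at most
twice their `O`-distance. Summing the `|O|` swap inequalities gives `0 ≤ 5 cost(O) - cost(S)`.
-/

theorem Fintype.exists_forall_card_fiber_le_of_card_le_mul {ι κ : Type*} [Fintype ι] [Fintype κ]
    [DecidableEq κ] {n : ℕ} (h : Fintype.card ι ≤ n * Fintype.card κ) :
    ∃ τ : ι → κ, ∀ s, #{i | τ i = s} ≤ n := by
  obtain ⟨e⟩ : Nonempty (ι ↪ κ × Fin n) :=
    Function.Embedding.nonempty_of_card_le (by simpa [mul_comm] using h)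
  refine ⟨fun i => (e i).1, fun s => ?_⟩
  calc #{i | (e i).1 = s} ≤ #(univ : Finset (Fin n)) :=
        card_le_card_of_injOn (fun i => (e i).2) (fun _ _ => mem_coe.2 (mem_univ _))
          fun i hi j hj hij => e.injective <|
            Prod.ext ((mem_filter.1 hi).2.trans (mem_filter.1 hj).2.symm) hij
    _ = n := by simp

section Pairing

variable {α β : Type*} [DecidableEq β] {O : Finset α} {S : Finset β} {σ : α → β}

theorem card_crowded_le_two_mul_card_free (hσ : ∀ o ∈ O, σ o ∈ S) (hcard : #O ≤ #S) :
    #{o ∈ O | 2 ≤ #{o' ∈ O | σ o' = σ o}} ≤ 2 * #{s ∈ S | #{o ∈ O | σ o = s} = 0} := by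
  set R := {o ∈ O | 2 ≤ #{o' ∈ O | σ o' = σ o}}
  have hfiber : ∀ s, #{o ∈ R | σ o = s} + 2 ≤
      2 * #{o ∈ O | σ o = s} + 2 * if #{o ∈ O | σ o = s} = 0 then 1 else 0 := by
    intro s
    by_cases hs : 2 ≤ #{o ∈ O | σ o = s}
    · have : #{o ∈ R | σ o = s} ≤ #{o ∈ O | σ o = s} :=
        card_le_card (filter_subset_filter _ (filter_subset _ _))
      split_ifs <;> omega
    · have : {o ∈ R | σ o = s} = ∅ :=
        filter_eq_empty_iff.2 fun o ho hos => hs (hos ▸ (mem_filter.1 ho).2)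
      rw [this, card_empty]
      split_ifs <;> omega
  have hR : #R = ∑ s ∈ S, #{o ∈ R | σ o = s} :=
    card_eq_sum_card_fiberwise fun o ho => hσ o (mem_filter.1 ho).1
  have hO : #O = ∑ s ∈ S, #{o ∈ O | σ o = s} := card_eq_sum_card_fiberwise hσ
  have hsum := sum_le_sum fun s (_ : s ∈ S) => hfiber s
  simp only [sum_add_distrib, ← mul_sum, sum_const, smul_eq_mul, ← hR, ← hO,
    ← card_filter] at hsum
  omega

theorem exists_swap_pairing (hσ : ∀ o ∈ O, σ o ∈ S) (hcard : #O ≤ #S) :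
    ∃ π : α → β, (∀ o ∈ O, π o ∈ S) ∧ (∀ o ∈ O, ∀ o' ∈ O, σ o' = π o → o' = o) ∧
      ∀ s, #{o ∈ O | π o = s} ≤ 2 := by
  classical
  set R := {o ∈ O | 2 ≤ #{o' ∈ O | σ o' = σ o}}
  set G := {s ∈ S | #{o ∈ O | σ o = s} = 0}
  have hfree : ∀ s ∈ G, ∀ o ∈ O, σ o ≠ s := fun s hs o ho hos =>
    filter_eq_empty_iff.1 (card_eq_zero.1 (mem_filter.1 hs).2) ho hos
  have hlonely : ∀ o ∈ O, o ∉ R → ∀ o' ∈ O, σ o' = σ o → o' = o := fun o ho hoR o' ho' h =>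
    card_le_one.1 (Nat.le_of_lt_succ (not_le.1 fun h2 => hoR (mem_filter.2 ⟨ho, h2⟩)))
      o' (mem_filter.2 ⟨ho', h⟩) o (mem_filter.2 ⟨ho, rfl⟩)
  obtain ⟨τ, hτ⟩ := Fintype.exists_forall_card_fiber_le_of_card_le_mul (ι := R) (κ := G) (n := 2)
    (by simpa only [Fintype.card_coe] using card_crowded_le_two_mul_card_free hσ hcard)
  let π : α → β := fun o => if h : o ∈ R then τ ⟨o, h⟩ else σ o
  have hπR : ∀ o (h : o ∈ R), π o = τ ⟨o, h⟩ := fun o h => dif_pos h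
  have hπ : ∀ o ∉ R, π o = σ o := fun o h => dif_neg h
  refine ⟨π, fun o ho => ?_, fun o ho o' ho' h => ?_, fun s => ?_⟩
  · by_cases hoR : o ∈ R
    · exact hπR o hoR ▸ (mem_filter.1 (τ ⟨o, hoR⟩).2).1
    · exact hπ o hoR ▸ hσ o ho
  · by_cases hoR : o ∈ R
    · exact absurd (h.trans (hπR o hoR)) (hfree _ (τ _).2 o' ho')
    · exact hlonely o ho hoR o' ho' (h.trans (hπ o hoR))
  by_cases hs : s ∈ G
  · calc _ ≤ #(({i | τ i = ⟨s, hs⟩} : Finset R).map (Function.Embedding.subtype _)) := by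
          refine card_le_card fun o ho => ?_
          obtain ⟨ho, hos⟩ := mem_filter.1 ho
          by_cases hoR : o ∈ R
          · exact mem_map.2 ⟨⟨o, hoR⟩,
              mem_filter.2 ⟨mem_univ _, Subtype.ext ((hπR o hoR).symm.trans hos)⟩, rfl⟩
          · exact absurd ((hπ o hoR).symm.trans hos) (hfree s hs o ho)
      _ ≤ 2 := (card_map _).trans_le (hτ _)
  · have hlonely_of_mem : ∀ o ∈ {o ∈ O | π o = s}, o ∉ R ∧ σ o = s := by
      intro o ho
      have hoR : o ∉ R := fun hoR => hs ((mem_filter.1 ho).2 ▸ hπR o hoR ▸ (τ _).2)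
      exact ⟨hoR, (hπ o hoR).symm.trans (mem_filter.1 ho).2⟩
    refine card_le_one.2 (fun o ho o' ho' => ?_) |>.trans one_le_two
    obtain ⟨hoR, hos⟩ := hlonely_of_mem o ho
    obtain ⟨-, ho's⟩ := hlonely_of_mem o' ho'
    exact (hlonely o (mem_filter.1 ho).1 hoR o' (mem_filter.1 ho').1 (ho's.trans hos.symm)).symm

end Pairing

section KMedian

variable {X : Type*} [MetricSpace X]

theorem dS_le_dist (p : X) {S : Finset X} {c : X} (hc : c ∈ S) : dS p S ≤ dist p c := by
  rw [dS, dif_pos ⟨c, hc⟩]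
  exact inf'_le _ hc

theorem exists_mem_dS_eq_dist (p : X) {S : Finset X} (hS : S.Nonempty) :
    ∃ c ∈ S, dS p S = dist p c := by
  rw [dS, dif_pos hS]
  exact exists_mem_eq_inf' hS _

theorem dist_le_of_dS_eq_dist {S : Finset X} {p q c c' : X} (hc : c ∈ S)
    (hqc' : dS q S = dist q c') : dist p c' ≤ 2 * dist p q + dist p c :=
  calc dist p c' ≤ dist p q + dS q S := hqc' ▸ dist_triangle p q c'
    _ ≤ dist p q + (dist q p + dist p c) := by
        gcongr
        exact (dS_le_dist q hc).trans (dist_triangle q p c)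
    _ = 2 * dist p q + dist p c := by rw [dist_comm q p]; ring

theorem exists_kmCost_eq_kmOpt (D : Finset X) {F : Finset X} {k : ℕ} (hk : k ≤ #F) :
    ∃ T ⊆ F, #T = k ∧ kmCost D T = kmOpt D F k := by
  refine Set.Nonempty.csInf_mem (s := {c | ∃ T ⊆ F, #T = k ∧ kmCost D T = c}) ?_ ?_
  · obtain ⟨T, hTF, hTk⟩ := exists_subset_card_eq hk
    exact ⟨_, T, hTF, hTk, rfl⟩
  · refine ((F.powersetCard k).image (kmCost D)).finite_toSet.subset ?_
    rintro _ ⟨T, hTF, hTk, rfl⟩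
    exact mem_image_of_mem _ (mem_powersetCard.2 ⟨hTF, hTk⟩)

variable [DecidableEq X]

/-- The swap is `s ↦ o`; `c` is the center of `S` nearest to `p`, `a` is `p`'s center in the
competing solution, and `c'` is the center of `S` nearest to `a`. -/
theorem dS_swap_sub_le {S : Finset X} {p o s a c c' : X} (hc : c ∈ S) (hpc : dS p S = dist p c)
    (hc' : c' ∈ S) (hac' : dS a S = dist a c') (hcap : c' = s → a = o) :
    dS p (insert o (S.erase s)) - dS p S ≤
      (if a = o then dist p a - dS p S else 0) + if s = c then 2 * dist p a else 0 := by
  have h2 : 0 ≤ if s = c then 2 * dist p a else 0 := by split_ifs <;> positivity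
  by_cases hao : a = o
  · subst hao
    rw [if_pos rfl]
    linarith [dS_le_dist p (mem_insert_self a (S.erase s))]
  rw [if_neg hao, zero_add]
  by_cases hsc : s = c
  · rw [if_pos hsc]
    have hmem : c' ∈ insert o (S.erase s) :=
      mem_insert_of_mem (mem_erase.2 ⟨fun h => hao (hcap h), hc'⟩)
    linarith [dS_le_dist p hmem, dist_le_of_dS_eq_dist (p := p) hc hac']
  · rw [if_neg hsc]
    have hmem : c ∈ insert o (S.erase s) := mem_insert_of_mem (mem_erase.2 ⟨Ne.symm hsc, hc⟩)
    linarith [dS_le_dist p hmem]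

theorem kmCost_le_five_mul_kmCost_of_swap_optimal {D F S O : Finset X} (hOF : O ⊆ F)
    (hO : O.Nonempty) (hcard : #O ≤ #S)
    (hlocal : ∀ c ∈ S, ∀ c' ∈ F, kmCost D S ≤ kmCost D (insert c' (S.erase c))) :
    kmCost D S ≤ 5 * kmCost D O := by
  have hS : S.Nonempty := card_pos.1 ((card_pos.2 hO).trans_le hcard)
  choose sj hsjS hsjd using fun p : X => exists_mem_dS_eq_dist p hS
  choose oj hojO hojd using fun p : X => exists_mem_dS_eq_dist p hO
  obtain ⟨π, hπS, hπcap, hπfiber⟩ := exists_swap_pairing (σ := sj) (fun o _ => hsjS o) hcard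
  let charge (p o : X) : ℝ := (if oj p = o then dist p (oj p) - dS p S else 0) +
    if π o = sj p then 2 * dist p (oj p) else 0
  have hswap : ∀ o ∈ O, 0 ≤ ∑ p ∈ D, charge p o := fun o ho =>
    calc 0 ≤ kmCost D (insert o (S.erase (π o))) - kmCost D S :=
          sub_nonneg.2 (hlocal _ (hπS o ho) o (hOF ho))
      _ = ∑ p ∈ D, (dS p (insert o (S.erase (π o))) - dS p S) := (sum_sub_distrib ..).symm
      _ ≤ ∑ p ∈ D, charge p o := sum_le_sum fun p _ =>
          dS_swap_sub_le (hsjS p) (hsjd p) (hsjS (oj p)) (hsjd (oj p)) (hπcap o ho _ (hojO p))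
  have hclient : ∀ p, ∑ o ∈ O, charge p o ≤ 5 * dS p O - dS p S := by
    intro p
    have hfiber : (#{o ∈ O | π o = sj p} : ℝ) ≤ 2 := by exact_mod_cast hπfiber (sj p)
    simp only [charge]
    rw [sum_add_distrib, sum_ite_eq, if_pos (hojO p), ← sum_filter, sum_const, nsmul_eq_mul,
      hojd p]
    nlinarith [dist_nonneg (x := p) (y := oj p)]
  suffices 0 ≤ 5 * kmCost D O - kmCost D S by linarith
  calc 0 ≤ ∑ o ∈ O, ∑ p ∈ D, charge p o := sum_nonneg hswap
    _ = ∑ p ∈ D, ∑ o ∈ O, charge p o := sum_comm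
    _ ≤ ∑ p ∈ D, (5 * dS p O - dS p S) := sum_le_sum fun p _ => hclient p
    _ = 5 * kmCost D O - kmCost D S := by rw [sum_sub_distrib, ← mul_sum]; rfl

end KMedian

theorem local_search_five_approximation_general {X : Type*} [MetricSpace X] [DecidableEq X]
    (D F : Finset X)
    (k : ℕ) (hk1 : 1 ≤ k) (hk2 : k ≤ F.card)
    (S : Finset X) (hScard : S.card = k)
    (hlocal : ∀ c ∈ S, ∀ c' ∈ F, kmCost D S ≤ kmCost D (insert c' (S.erase c))) :
    kmCost D S ≤ 5 * kmOpt D F k := by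
  obtain ⟨O, hOF, hOcard, hOopt⟩ := exists_kmCost_eq_kmOpt D hk2
  rw [← hOopt]
  exact kmCost_le_five_mul_kmCost_of_swap_optimal hOF (card_pos.1 (by omega)) (by omega) hlocal

/-- Local search with single swaps is a 5-approximation for k-median: if `S ⊆ F` with
`|S| = k` is locally optimal under single swaps (no swap of one center of `S` for one
center of `F` decreases the cost), then `cost(S) ≤ 5·opt_k`. -/
theorem local_search_five_approximation {X : Type*} [MetricSpace X] [DecidableEq X]
    (D F : Finset X) (hD : D.Nonempty) (hF : F.Nonempty)
    (k : ℕ) (hk1 : 1 ≤ k) (hk2 : k ≤ F.card)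
    (S : Finset X) (hSF : S ⊆ F) (hScard : S.card = k)
    (hlocal : ∀ c ∈ S, ∀ c' ∈ F, kmCost D S ≤ kmCost D (insert c' (S.erase c))) :
    kmCost D S ≤ 5 * kmOpt D F k :=
  local_search_five_approximation_general D F k hk1 hk2 S hScard hlocal
end

section
/- A locally optimal solution nearly optimally serves the clients of pure optimal clusters: let ε ∈ (0, 1/12] and 1 ≤ k ≤ |F|. Let OPT ⊆ F with |OPT| = k and S ⊆ F with |S| = k, with assignments σ_OPT for OPT and σ_S for S; write opt := cost(OPT), and suppose cost(S) ≤ 5·opt and that S is locally optimal under single swaps (cost((S − {c}) ∪ {c'}) ≥ cost(S) for all c ∈ S, c' ∈ F). Call C*_o := σ_OPT⁻¹(o) pure if there exists c ∈ S with |σ_S⁻¹(c) Δ C*_o| ≤ 3ε·min(|C*_o|, |σ_S⁻¹(c)|), and for each pure o fix such a center t(o) ∈ S. Let P ⊆ D be the set of clients p for which C*_{σ_OPT(p)} is pure. Then Σ_{p∈P} d(p, t(σ_OPT(p))) ≤ Σ_{p∈P} d(p, OPT) + 48·ε·opt. -/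
open Finset

/-- The cluster of center `o` under assignment `σ`. -/
def cluster {X : Type*} [DecidableEq X] (D : Finset X) (σ : X → X) (o : X) : Finset X :=
  D.filter (fun p => σ p = o)

/-- The cluster of `o ∈ OPT` is pure (w.r.t. `S`) if some cluster of `S` agrees with it
up to `3ε·min` of the cluster sizes. -/
def IsPure {X : Type*} [DecidableEq X] (D S : Finset X) (σS σO : X → X) (ε : ℝ)
    (o : X) : Prop :=
  ∃ c ∈ S, ((symmDiff (cluster D σS c) (cluster D σO o)).card : ℝ)
    ≤ 3 * ε * min ((cluster D σO o).card : ℝ) ((cluster D σS c).card : ℝ)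

lemma dS_le {X : Type*} [MetricSpace X] {p x : X} {S : Finset X} (hx : x ∈ S) :
    dS p S ≤ dist p x := by
  rw [dS, dif_pos ⟨x, hx⟩]
  exact inf'_le _ hx

lemma dS_nonneg {X : Type*} [MetricSpace X] (p : X) (S : Finset X) : 0 ≤ dS p S := by
  rw [dS]
  split
  · exact le_inf' _ _ (fun b _ => dist_nonneg)
  · exact le_refl 0

lemma per_cluster {X : Type*} [MetricSpace X] [DecidableEq X]
    (D S : Finset X) (σS σO : X → X) (ε : ℝ) (hε0 : 0 < ε) (hε1 : ε ≤ 1/12)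
    (hσS : ∀ p ∈ D, σS p ∈ S ∧ dist p (σS p) = dS p S)
    (o c : X) (hc : c ∈ S)
    (hswap : kmCost D S ≤ kmCost D (insert o (S.erase c)))
    (hpure : ((symmDiff (cluster D σS c) (cluster D σO o)).card : ℝ)
      ≤ 3 * ε * min ((cluster D σO o).card : ℝ) ((cluster D σS c).card : ℝ)) :
    ∑ p ∈ cluster D σO o, dist p c
      ≤ ∑ p ∈ cluster D σO o, dist p o + 12 * ε * ∑ p ∈ cluster D σO o, dist p o := by
  classical
  set Co := cluster D σO o with hCo
  set Cc := cluster D σS c with hCc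
  set A := Cc ∩ Co with hA
  set B := Co \ Cc with hB
  set E := Cc \ Co with hE
  set T := insert o (S.erase c) with hT
  have hCoD : Co ⊆ D := filter_subset _ _
  have hCcD : Cc ⊆ D := filter_subset _ _
  have hmemCc : ∀ p ∈ D, (p ∈ Cc ↔ σS p = c) := by
    intro p hp
    rw [hCc, cluster, mem_filter]
    exact ⟨fun h => h.2, fun h => ⟨hp, h⟩⟩
  have hACc : A ⊆ Cc := inter_subset_left
  have hACo : A ⊆ Co := inter_subset_right
  have hoT : o ∈ T := mem_insert_self _ _
  -- pointwise bounds for the swapped solution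
  have h1 : ∀ p ∈ D \ Cc, dS p T ≤ dS p S := by
    intro p hp
    obtain ⟨hpD, hpCc⟩ := mem_sdiff.mp hp
    obtain ⟨hs1, hs2⟩ := hσS p hpD
    have hne : σS p ≠ c := fun h => hpCc ((hmemCc p hpD).mpr h)
    have : σS p ∈ T := mem_insert_of_mem (mem_erase.mpr ⟨hne, hs1⟩)
    calc dS p T ≤ dist p (σS p) := dS_le this
    _ = dS p S := hs2
  have h2 : ∀ p ∈ E, dS p T ≤ dS p S + dist c o := by
    intro p hp
    have hpD : p ∈ D := hCcD (mem_sdiff.mp hp).1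
    obtain ⟨hs1, hs2⟩ := hσS p hpD
    have hsc : σS p = c := (hmemCc p hpD).mp (mem_sdiff.mp hp).1
    calc dS p T ≤ dist p o := dS_le hoT
    _ ≤ dist p c + dist c o := dist_triangle _ _ _
    _ = dS p S + dist c o := by rw [← hsc, hs2]
  have h3 : ∀ p ∈ A, dS p T ≤ dist p o := fun p _ => dS_le hoT
  -- splitting sums
  have hCcsplit : Cc \ A = E := by
    ext x; simp only [hA, hE, mem_sdiff, mem_inter]; tauto
  have hCosplit : Co \ A = B := by
    ext x; simp only [hA, hB, mem_sdiff, mem_inter]; tauto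
  have hsplit : ∀ f : X → ℝ, ∑ p ∈ D, f p = ∑ p ∈ D \ Cc, f p + (∑ p ∈ E, f p + ∑ p ∈ A, f p) := by
    intro f
    rw [← sum_sdiff hCcD]
    congr 1
    rw [← sum_sdiff hACc, hCcsplit]
  -- the key swap inequality
  have key : ∑ p ∈ A, dS p S ≤ ∑ p ∈ A, dist p o + (E.card : ℝ) * dist c o := by
    have h := hswap
    unfold kmCost at h
    rw [hsplit (fun p => dS p S), hsplit (fun p => dS p T)] at h
    have hsum1 : ∑ p ∈ D \ Cc, dS p T ≤ ∑ p ∈ D \ Cc, dS p S := sum_le_sum h1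
    have hsum2 : ∑ p ∈ E, dS p T ≤ ∑ p ∈ E, dS p S + (E.card : ℝ) * dist c o := by
      calc ∑ p ∈ E, dS p T ≤ ∑ p ∈ E, (dS p S + dist c o) := sum_le_sum h2
      _ = ∑ p ∈ E, dS p S + (E.card : ℝ) * dist c o := by
          rw [sum_add_distrib, sum_const, nsmul_eq_mul]
    have hsum3 : ∑ p ∈ A, dS p T ≤ ∑ p ∈ A, dist p o := sum_le_sum h3
    linarith
  -- notation
  set m : ℝ := (A.card : ℝ) with hm
  set b : ℝ := (B.card : ℝ) with hb
  set e : ℝ := (E.card : ℝ) with he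
  set w : ℝ := dist c o with hw
  set Oo : ℝ := ∑ p ∈ Co, dist p o with hOo
  set Oa : ℝ := ∑ p ∈ A, dist p o with hOa
  set Sa : ℝ := ∑ p ∈ A, dS p S with hSa
  have hwnn : 0 ≤ w := dist_nonneg
  have hmnn : 0 ≤ m := Nat.cast_nonneg _
  have hbnn : 0 ≤ b := Nat.cast_nonneg _
  have henn : 0 ≤ e := Nat.cast_nonneg _
  have hOonn : 0 ≤ Oo := sum_nonneg (fun p _ => dist_nonneg)
  -- cardinalities
  have hcardCo : (Co.card : ℝ) = m + b := by
    have := card_sdiff_add_card_eq_card hACo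
    rw [hCosplit] at this
    push_cast [← this]; ring
  have hsymm : ((symmDiff Cc Co).card : ℝ) = e + b := by
    have hd : Disjoint E B := by
      rw [Finset.disjoint_left]
      intro x hx hx'
      exact (mem_sdiff.mp hx).2 ((mem_sdiff.mp hx').1)
    have : symmDiff Cc Co = E ∪ B := by
      ext x
      simp only [Finset.mem_symmDiff, mem_union, mem_sdiff, hE, hB]
    rw [this, card_union_of_disjoint hd]; push_cast; ring
  have hpure' : e + b ≤ 3 * ε * (m + b) := by
    rw [hsymm, hcardCo] at hpure
    calc e + b ≤ 3 * ε * min (m + b) (Cc.card : ℝ) := hpure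
    _ ≤ 3 * ε * (m + b) := by
        apply mul_le_mul_of_nonneg_left (min_le_left _ _) (by positivity)
  -- the triangle-inequality bound m*w ≤ Oa + Sa
  have f2 : m * w ≤ Oa + Sa := by
    have : ∀ p ∈ A, w ≤ dist p o + dS p S := by
      intro p hp
      have hpD : p ∈ D := hCcD (hACc hp)
      obtain ⟨hs1, hs2⟩ := hσS p hpD
      have hsc : σS p = c := (hmemCc p hpD).mp (hACc hp)
      calc w = dist c o := rfl
      _ ≤ dist c p + dist p o := dist_triangle _ _ _
      _ = dist p c + dist p o := by rw [dist_comm]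
      _ = dS p S + dist p o := by rw [← hsc, hs2]
      _ = dist p o + dS p S := by ring
    calc m * w = ∑ _p ∈ A, w := by rw [sum_const, nsmul_eq_mul]
    _ ≤ ∑ p ∈ A, (dist p o + dS p S) := sum_le_sum this
    _ = Oa + Sa := by rw [sum_add_distrib]
  have f3 : Oa ≤ Oo := by
    apply sum_le_sum_of_subset_of_nonneg hACo
    intros; exact dist_nonneg
  -- nonlinear chain
  have s1 : 3 * b ≤ m := by
    nlinarith [mul_nonneg (by linarith : (0:ℝ) ≤ 1/12 - ε) (by linarith : (0:ℝ) ≤ m + b)]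
  have hEB : e + b ≤ 4 * ε * m := by
    have h43 : m + b ≤ (4/3) * m := by linarith
    have := mul_le_mul_of_nonneg_left h43 (by positivity : (0:ℝ) ≤ 3 * ε)
    linarith
  have s3 : m * w ≤ 3 * Oo := by
    have he3 : e ≤ (1/3) * m := by
      nlinarith [mul_le_mul_of_nonneg_right hε1 hmnn]
    have hew : e * w ≤ (1/3) * (m * w) := by
      calc e * w ≤ (1/3) * m * w := mul_le_mul_of_nonneg_right he3 hwnn
      _ = (1/3) * (m * w) := by ring
    linarith [key, f2, f3, hew]
  have s4 : (e + b) * w ≤ 12 * ε * Oo := by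
    calc (e + b) * w ≤ 4 * ε * m * w := mul_le_mul_of_nonneg_right hEB hwnn
    _ = 4 * ε * (m * w) := by ring
    _ ≤ 4 * ε * (3 * Oo) := mul_le_mul_of_nonneg_left s3 (by positivity)
    _ = 12 * ε * Oo := by ring
  -- assemble the cluster bound
  have hsum_c : ∑ p ∈ Co, dist p c = ∑ p ∈ B, dist p c + ∑ p ∈ A, dist p c := by
    rw [← sum_sdiff hACo, hCosplit]
  have hsum_o : Oo = ∑ p ∈ B, dist p o + Oa := by
    rw [hOo, ← sum_sdiff hACo, hCosplit, hOa]
  have hAc : ∑ p ∈ A, dist p c = Sa := by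
    apply sum_congr rfl
    intro p hp
    have hpD : p ∈ D := hCcD (hACc hp)
    obtain ⟨hs1, hs2⟩ := hσS p hpD
    have hsc : σS p = c := (hmemCc p hpD).mp (hACc hp)
    rw [← hsc, hs2]
  have hBc : ∑ p ∈ B, dist p c ≤ ∑ p ∈ B, dist p o + b * w := by
    calc ∑ p ∈ B, dist p c ≤ ∑ p ∈ B, (dist p o + w) := by
          apply sum_le_sum
          intro p _
          calc dist p c ≤ dist p o + dist o c := dist_triangle _ _ _
          _ = dist p o + w := by rw [hw, dist_comm c o]
    _ = ∑ p ∈ B, dist p o + b * w := by rw [sum_add_distrib, sum_const, nsmul_eq_mul]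
  calc ∑ p ∈ Co, dist p c = ∑ p ∈ B, dist p c + Sa := by rw [hsum_c, hAc]
  _ ≤ (∑ p ∈ B, dist p o + b * w) + (Oa + e * w) := by linarith [key]
  _ = Oo + (e + b) * w := by rw [hsum_o]; ring
  _ ≤ Oo + 12 * ε * Oo := by linarith

open scoped Classical in
/-- A locally optimal solution nearly optimally serves the clients of pure optimal
clusters: with `t(o)` a center of `S` witnessing pureness of each pure cluster `C*_o`,
and `P` the clients of pure clusters,
`Σ_{p∈P} d(p, t(σ_OPT(p))) ≤ Σ_{p∈P} d(p, OPT) + 48·ε·opt`. -/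
theorem pure_clusters_cost_bound {X : Type*} [MetricSpace X] [DecidableEq X]
    (D F : Finset X) (hD : D.Nonempty) (hF : F.Nonempty)
    (ε : ℝ) (hε0 : 0 < ε) (hε1 : ε ≤ 1 / 12)
    (k : ℕ) (hk1 : 1 ≤ k) (hkF : k ≤ F.card)
    (OPT S : Finset X) (hOPTF : OPT ⊆ F) (hSF : S ⊆ F)
    (hOPTcard : OPT.card = k) (hScard : S.card = k)
    (σO σS : X → X)
    (hσO : ∀ p ∈ D, σO p ∈ OPT ∧ dist p (σO p) = dS p OPT)
    (hσS : ∀ p ∈ D, σS p ∈ S ∧ dist p (σS p) = dS p S)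
    (h5 : kmCost D S ≤ 5 * kmCost D OPT)
    (hlocal : ∀ c ∈ S, ∀ c' ∈ F, kmCost D S ≤ kmCost D (insert c' (S.erase c)))
    (t : X → X)
    (ht : ∀ o ∈ OPT, IsPure D S σS σO ε o →
      t o ∈ S ∧ ((symmDiff (cluster D σS (t o)) (cluster D σO o)).card : ℝ)
        ≤ 3 * ε * min ((cluster D σO o).card : ℝ) ((cluster D σS (t o)).card : ℝ)) :
    ∑ p ∈ D.filter (fun p => IsPure D S σS σO ε (σO p)), dist p (t (σO p))
      ≤ (∑ p ∈ D.filter (fun p => IsPure D S σS σO ε (σO p)), dS p OPT)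
        + 48 * ε * kmCost D OPT := by
  classical
  set P := D.filter (fun p => IsPure D S σS σO ε (σO p)) with hP
  set Q := OPT.filter (fun o => IsPure D S σS σO ε o) with hQ
  have hmaps : ∀ p ∈ P, σO p ∈ Q := by
    intro p hp
    obtain ⟨hpD, hpure⟩ := mem_filter.mp hp
    exact mem_filter.mpr ⟨(hσO p hpD).1, hpure⟩
  have hfiber : ∀ o ∈ Q, P.filter (fun p => σO p = o) = cluster D σO o := by
    intro o ho
    have hopure : IsPure D S σS σO ε o := (mem_filter.mp ho).2
    ext p
    constructor
    · rintro hp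
      obtain ⟨hp1, heq⟩ := mem_filter.mp hp
      exact mem_filter.mpr ⟨(mem_filter.mp hp1).1, heq⟩
    · intro hpc
      obtain ⟨hpD, heq⟩ := mem_filter.mp hpc
      exact mem_filter.mpr ⟨mem_filter.mpr ⟨hpD, heq ▸ hopure⟩, heq⟩
  have hfib : ∀ g : X → X → ℝ,
      ∑ p ∈ P, g (σO p) p = ∑ o ∈ Q, ∑ p ∈ cluster D σO o, g o p := by
    intro g
    calc ∑ p ∈ P, g (σO p) p
        = ∑ o ∈ Q, ∑ p ∈ P.filter (fun p => σO p = o), g (σO p) p :=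
          (sum_fiberwise_of_maps_to hmaps _).symm
    _ = ∑ o ∈ Q, ∑ p ∈ cluster D σO o, g o p := by
        refine sum_congr rfl fun o ho => ?_
        rw [hfiber o ho]
        refine sum_congr rfl fun p hp => ?_
        have h : σO p = o := (mem_filter.mp hp).2
        rw [h]
  -- the RHS sum over P equals the fiberwise sum of dist p o
  have hRHS : ∑ p ∈ P, dS p OPT = ∑ o ∈ Q, ∑ p ∈ cluster D σO o, dist p o := by
    calc ∑ p ∈ P, dS p OPT = ∑ p ∈ P, dist p (σO p) := by
          refine sum_congr rfl fun p hp => ?_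
          exact ((hσO p (mem_filter.mp hp).1).2).symm
    _ = ∑ o ∈ Q, ∑ p ∈ cluster D σO o, dist p o := hfib (fun o p => dist p o)
  -- kmCost D OPT as fiberwise sum
  have hOPTsum : kmCost D OPT = ∑ o ∈ OPT, ∑ p ∈ cluster D σO o, dist p o := by
    have h1 : kmCost D OPT = ∑ p ∈ D, dist p (σO p) :=
      sum_congr rfl fun p hp => ((hσO p hp).2).symm
    rw [h1, ← sum_fiberwise_of_maps_to (fun p hp => (hσO p hp).1) (fun p => dist p (σO p))]
    refine sum_congr rfl fun o ho => ?_
    have hfeq : D.filter (fun p => σO p = o) = cluster D σO o := by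
      ext p; simp [cluster]
    rw [hfeq]
    refine sum_congr rfl fun p hp => ?_
    have h : σO p = o := (mem_filter.mp hp).2
    rw [h]
  have hQle : ∑ o ∈ Q, ∑ p ∈ cluster D σO o, dist p o ≤ kmCost D OPT := by
    rw [hOPTsum]
    refine sum_le_sum_of_subset_of_nonneg (filter_subset _ _) ?_
    intro o _ _
    exact sum_nonneg fun p _ => dist_nonneg
  have hOPTnn : 0 ≤ kmCost D OPT := sum_nonneg fun p _ => dS_nonneg p OPT
  have hQnn : 0 ≤ ∑ o ∈ Q, ∑ p ∈ cluster D σO o, dist p o :=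
    sum_nonneg fun o _ => sum_nonneg fun p _ => dist_nonneg
  have hmain : ∀ o ∈ Q, ∑ p ∈ cluster D σO o, dist p (t o)
      ≤ ∑ p ∈ cluster D σO o, dist p o + 12 * ε * ∑ p ∈ cluster D σO o, dist p o := by
    intro o ho
    obtain ⟨hoOPT, hopure⟩ := mem_filter.mp ho
    obtain ⟨htS, htpure⟩ := ht o hoOPT hopure
    exact per_cluster D S σS σO ε hε0 hε1 hσS o (t o) htS
      (hlocal (t o) htS o (hOPTF hoOPT)) htpure
  calc ∑ p ∈ P, dist p (t (σO p))
      = ∑ o ∈ Q, ∑ p ∈ cluster D σO o, dist p (t o) := hfib (fun o p => dist p (t o))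
  _ ≤ ∑ o ∈ Q, (∑ p ∈ cluster D σO o, dist p o + 12 * ε * ∑ p ∈ cluster D σO o, dist p o) :=
      sum_le_sum hmain
  _ = (∑ o ∈ Q, ∑ p ∈ cluster D σO o, dist p o)
      + 12 * ε * (∑ o ∈ Q, ∑ p ∈ cluster D σO o, dist p o) := by
      rw [sum_add_distrib, mul_sum]
  _ ≤ (∑ p ∈ P, dS p OPT) + 48 * ε * kmCost D OPT := by
      rw [hRHS]
      have h12 : 12 * ε * (∑ o ∈ Q, ∑ p ∈ cluster D σO o, dist p o)
          ≤ 12 * ε * kmCost D OPT := by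
        apply mul_le_mul_of_nonneg_left hQle (by positivity)
      nlinarith [mul_nonneg hε0.le hOPTnn]
end

section
/- Leader cost bound: let ε ∈ (0, 1/2], let C ⊆ D be nonempty, c* ∈ F, let S ⊆ F be nonempty, let a ∈ ℝ satisfy (1−ε)·|C|·a ≤ Σ_{p∈C} d(p,c*), and let ℓ be a point with d(ℓ,c*) ≤ a. Then d(ℓ,S) ≤ ((2+2ε)/|C|)·Σ_{p∈C} ( d(p,c*) + d(p,S) ). -/
open Finset

lemma dS_triangle {X : Type*} [MetricSpace X] (x y : X) (S : Finset X) (hS : S.Nonempty) :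
    dS x S ≤ dist x y + dS y S := by
  unfold dS
  rw [dif_pos hS, dif_pos hS]
  obtain ⟨c, hc, hcval⟩ := S.exists_mem_eq_inf' hS (fun c => dist y c)
  calc S.inf' hS (fun c => dist x c) ≤ dist x c := inf'_le _ hc
    _ ≤ dist x y + dist y c := dist_triangle x y c
    _ = dist x y + S.inf' hS (fun c => dist y c) := by rw [hcval]

/-- Leader cost bound: if `C` is a cluster with center `c*`, the radius `a` satisfies
`(1−ε)·|C|·a ≤ Σ_{p∈C} d(p,c*)`, and `ℓ` is a leader (`d(ℓ,c*) ≤ a`), then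
`d(ℓ,S) ≤ ((2+2ε)/|C|)·Σ_{p∈C} (d(p,c*) + d(p,S))`. -/
theorem leader_cost_bound {X : Type*} [MetricSpace X]
    (D F : Finset X)
    (ε : ℝ) (hε0 : 0 < ε) (hε1 : ε ≤ 1 / 2)
    (C : Finset X) (hCne : C.Nonempty) (hCD : C ⊆ D)
    (cstar : X) (hcF : cstar ∈ F)
    (S : Finset X) (hSne : S.Nonempty) (hSF : S ⊆ F)
    (a : ℝ) (ha : (1 - ε) * (C.card : ℝ) * a ≤ ∑ p ∈ C, dist p cstar)
    (ℓ : X) (hℓ : dist ℓ cstar ≤ a) :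
    dS ℓ S ≤ ((2 + 2 * ε) / (C.card : ℝ)) * ∑ p ∈ C, (dist p cstar + dS p S) := by
  have hC : (0:ℝ) < C.card := by exact_mod_cast (Finset.card_pos.mpr hCne)
  set T := ∑ p ∈ C, (dist p cstar + dS p S) with hT
  set Sd := ∑ p ∈ C, dist p cstar with hSd
  have hSd_le_T : Sd ≤ T := by
    apply Finset.sum_le_sum
    intro p hp
    have := dS_nonneg p S
    linarith
  have hSd_nonneg : 0 ≤ Sd := Finset.sum_nonneg (fun p _ => dist_nonneg)
  -- pointwise bound summed over C
  have h1 : (C.card : ℝ) * dS ℓ S ≤ (C.card : ℝ) * a + T := by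
    have : ∀ p ∈ C, dS ℓ S ≤ a + (dist p cstar + dS p S) := by
      intro p hp
      have h2 := dS_triangle ℓ p S hSne
      have h3 := dist_triangle ℓ cstar p
      have h4 : dist cstar p = dist p cstar := dist_comm _ _
      linarith
    have hsum := Finset.sum_le_sum this
    simp only [Finset.sum_const, Finset.sum_add_distrib, nsmul_eq_mul] at hsum
    rw [hT, Finset.sum_add_distrib]
    linarith
  -- card * a ≤ (1+2ε) Sd
  have h5 : (C.card : ℝ) * a ≤ (1 + 2 * ε) * Sd := by
    have h6 : (1 - ε) * ((1 + 2 * ε) * Sd) ≥ (1 - ε) * ((C.card : ℝ) * a) := by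
      nlinarith [mul_nonneg (mul_nonneg hε0.le (by linarith : (0:ℝ) ≤ 1 - 2*ε)) hSd_nonneg]
    have hpos : (0:ℝ) < 1 - ε := by linarith
    exact le_of_mul_le_mul_left (by linarith) hpos
  have h7 : (C.card : ℝ) * dS ℓ S ≤ (2 + 2 * ε) * T := by
    nlinarith
  rw [div_mul_eq_mul_div, le_div_iff₀ hC]
  linarith
end

section
/- Cost of serving an expensive cluster through a dummy center placed on a valid ball: let ε ∈ (0, 1/2], let C ⊆ D be nonempty, c* ∈ F, let S ⊆ F be nonempty, and let ℓ be a point and a, ρ reals with: d(ℓ,c*) ≤ a; (1−ε)·|C|·a ≤ Σ_{p∈C} d(p,c*); and a ≤ ρ ≤ a + (ε/|C|)·Σ_{p∈C} ( d(p,c*) + d(p,S) ). Then Σ_{p∈C} ( d(p,ℓ) + ρ ) ≤ (3+5ε)·Σ_{p∈C} d(p,c*) + ε·Σ_{p∈C} d(p,S). -/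
/-!
By the triangle inequality through `c*`, each `d(p,ℓ)` is at most `d(p,c*) + a`, and summing the
bound on `ρ` gives `|C|ρ ≤ |C|a + ε Σ (d(p,c*) + d(p,S))`. The leader condition bounds
`|C|a ≤ Σ d(p,c*) / (1-ε)`, which is at most `(1+2ε) Σ d(p,c*)` because `ε ≤ 1/2`.
Adding up: `Σ d(p,c*) + 2(1+2ε) Σ d(p,c*) + ε Σ d(p,c*) = (3+5ε) Σ d(p,c*)`.
-/

open Finset

theorem sum_dist_le_sum_dist_add_card_mul {X : Type*} [PseudoMetricSpace X] (C : Finset X)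
    {ℓ c : X} {a : ℝ} (hℓ : dist ℓ c ≤ a) :
    ∑ p ∈ C, dist p ℓ ≤ ∑ p ∈ C, dist p c + C.card * a := by
  calc ∑ p ∈ C, dist p ℓ
      ≤ ∑ p ∈ C, (dist p c + a) := sum_le_sum fun p _ => by
        linarith [dist_triangle_right p ℓ c]
    _ = ∑ p ∈ C, dist p c + C.card * a := by
        rw [sum_add_distrib, sum_const, nsmul_eq_mul]

theorem le_one_add_two_mul_of_one_sub_mul_le {ε x y : ℝ} (hε0 : 0 ≤ ε) (hε1 : ε ≤ 1 / 2)
    (hx : 0 ≤ x) (h : (1 - ε) * x ≤ y) : x ≤ (1 + 2 * ε) * y := by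
  nlinarith [mul_nonneg (mul_nonneg hε0 hx) (by linarith : (0 : ℝ) ≤ 1 - 2 * ε)]

theorem mul_le_mul_add_of_le_add_div_mul {n ρ a ε s : ℝ} (hn : 0 < n)
    (h : ρ ≤ a + ε / n * s) : n * ρ ≤ n * a + ε * s := by
  calc n * ρ ≤ n * (a + ε / n * s) := by gcongr
    _ = n * a + ε * s := by field_simp

theorem dummy_center_cost_bound_general {X : Type*} [MetricSpace X]
    (ε : ℝ) (hε0 : 0 < ε) (hε1 : ε ≤ 1 / 2)
    (C : Finset X) (hCne : C.Nonempty)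
    (cstar : X)
    (S : Finset X)
    (ℓ : X) (a ρ : ℝ)
    (hℓ : dist ℓ cstar ≤ a)
    (ha : (1 - ε) * (C.card : ℝ) * a ≤ ∑ p ∈ C, dist p cstar)
    (hρ2 : ρ ≤ a + (ε / (C.card : ℝ)) * ∑ p ∈ C, (dist p cstar + dS p S)) :
    ∑ p ∈ C, (dist p ℓ + ρ)
      ≤ (3 + 5 * ε) * (∑ p ∈ C, dist p cstar) + ε * ∑ p ∈ C, dS p S := by
  have h_leader := sum_dist_le_sum_dist_add_card_mul C hℓ
  have h_radius := mul_le_mul_add_of_le_add_div_mul (by exact_mod_cast hCne.card_pos) hρ2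
  rw [sum_add_distrib] at h_radius
  have h_card_a : (C.card : ℝ) * a ≤ (1 + 2 * ε) * ∑ p ∈ C, dist p cstar :=
    le_one_add_two_mul_of_one_sub_mul_le hε0.le hε1
      (mul_nonneg (Nat.cast_nonneg _) (dist_nonneg.trans hℓ)) (by linarith)
  rw [sum_add_distrib, sum_const, nsmul_eq_mul]
  linarith

/-- Cost of serving an expensive cluster through a dummy center placed on a valid ball:
if `ℓ` is a leader of the cluster `C` with center `c*` (`d(ℓ,c*) ≤ a`, with
`(1−ε)·|C|·a ≤ Σ_{p∈C} d(p,c*)`), and the radius `ρ` satisfies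
`a ≤ ρ ≤ a + (ε/|C|)·Σ_{p∈C}(d(p,c*)+d(p,S))`, then
`Σ_{p∈C} (d(p,ℓ) + ρ) ≤ (3+5ε)·Σ_{p∈C} d(p,c*) + ε·Σ_{p∈C} d(p,S)`. -/
theorem dummy_center_cost_bound {X : Type*} [MetricSpace X]
    (D F : Finset X)
    (ε : ℝ) (hε0 : 0 < ε) (hε1 : ε ≤ 1 / 2)
    (C : Finset X) (hCne : C.Nonempty) (hCD : C ⊆ D)
    (cstar : X) (hcF : cstar ∈ F)
    (S : Finset X) (hSne : S.Nonempty) (hSF : S ⊆ F)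
    (ℓ : X) (a ρ : ℝ)
    (hℓ : dist ℓ cstar ≤ a)
    (ha : (1 - ε) * (C.card : ℝ) * a ≤ ∑ p ∈ C, dist p cstar)
    (hρ1 : a ≤ ρ)
    (hρ2 : ρ ≤ a + (ε / (C.card : ℝ)) * ∑ p ∈ C, (dist p cstar + dS p S)) :
    ∑ p ∈ C, (dist p ℓ + ρ)
      ≤ (3 + 5 * ε) * (∑ p ∈ C, dist p cstar) + ε * ∑ p ∈ C, dS p S :=
  dummy_center_cost_bound_general ε hε0 hε1 C hCne cstar S ℓ a ρ hℓ ha hρ2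
end

section
/- Existence of a good center-removal set S₀: let ε ∈ (0, 1/2] and 1 ≤ k ≤ |F|. Let OPT ⊆ F with |OPT| = k and an assignment σ_OPT for OPT, and write C_{c*} := σ_OPT⁻¹(c*). Let S ⊆ F with |S| = k, let Ô ⊆ OPT with C_{c*} ≠ ∅ for every c* ∈ Ô, let t : OPT − Ô → S be any map, and for each c* ∈ Ô let ℓ_{c*} ∈ D and a_{c*}, ρ_{c*} ∈ ℝ satisfy: d(ℓ_{c*}, c*) ≤ a_{c*}; (1−ε)·|C_{c*}|·a_{c*} ≤ Σ_{p∈C_{c*}} d(p,c*); and a_{c*} ≤ ρ_{c*} ≤ a_{c*} + (ε/|C_{c*}|)·Σ_{p∈C_{c*}} ( d(p,c*) + d(p,S) ). Then there exists S₀ ⊆ S with |S₀| = |Ô| and S₀ ∩ t(OPT − Ô) = ∅ such that Σ_{p∈D} min( d(p, S − S₀), min_{c*∈Ô} ( d(p, ℓ_{c*}) + ρ_{c*} ) ) ≤ Σ_{c*∈Ô} ( (3+5ε)·Σ_{p∈C_{c*}} d(p,c*) + ε·Σ_{p∈C_{c*}} d(p,S) ) + Σ_{c*∈OPT−Ô}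 Σ_{p∈C_{c*}} d(p, t(c*)), where for each p the minimum is over a nonempty collection of options (for every client p, either σ_OPT(p) ∈ Ô, giving a ball option, or t(σ_OPT(p)) ∈ S − S₀). -/
open Finset

/-- Per-cluster bound: serving every client of a nonempty cluster `C` by the dummy
center of the ball `B(ℓo, ρo)` costs at most `(3+5ε)·Σ d(p,o) + ε·Σ d(p,S)`. -/
lemma cluster_ball_bound {X : Type*} [MetricSpace X] (S : Finset X)
    (C : Finset X) (hC : C.Nonempty) (o ℓo : X) (ao ρo ε : ℝ)
    (hε0 : 0 < ε) (hε1 : ε ≤ 1 / 2)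
    (h1 : dist ℓo o ≤ ao)
    (h2 : (1 - ε) * (C.card : ℝ) * ao ≤ ∑ p ∈ C, dist p o)
    (h3 : ao ≤ ρo)
    (h4 : ρo ≤ ao + (ε / (C.card : ℝ)) * ∑ p ∈ C, (dist p o + dS p S)) :
    ∑ p ∈ C, (dist p ℓo + ρo)
      ≤ (3 + 5 * ε) * (∑ p ∈ C, dist p o) + ε * ∑ p ∈ C, dS p S := by
  have hn : (0 : ℝ) < (C.card : ℝ) := by
    exact_mod_cast Finset.card_pos.mpr hC
  set n : ℝ := (C.card : ℝ) with hnd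
  set A : ℝ := ∑ p ∈ C, dist p o with hA
  set B : ℝ := ∑ p ∈ C, dS p S with hB
  have hA0 : 0 ≤ A := Finset.sum_nonneg fun p _ => dist_nonneg
  have ha0 : 0 ≤ ao := le_trans dist_nonneg h1
  have hsplit : (∑ p ∈ C, (dist p o + dS p S)) = A + B := Finset.sum_add_distrib
  have hℓ : ∑ p ∈ C, dist p ℓo ≤ A + n * ao := by
    have : ∑ p ∈ C, dist p ℓo ≤ ∑ p ∈ C, (dist p o + ao) :=
      Finset.sum_le_sum fun p _ => by
        calc dist p ℓo ≤ dist p o + dist o ℓo := dist_triangle p o ℓo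
          _ = dist p o + dist ℓo o := by rw [dist_comm o ℓo]
          _ ≤ dist p o + ao := by linarith
    simpa [Finset.sum_add_distrib, mul_comm] using this
  have hρ : n * ρo ≤ n * ao + ε * (A + B) := by
    have := mul_le_mul_of_nonneg_left h4 (le_of_lt hn)
    have hcancel : n * (ε / n * (A + B)) = ε * (A + B) := by
      field_simp
    rw [hsplit] at this
    calc n * ρo ≤ n * (ao + ε / n * (A + B)) := this
      _ = n * ao + ε * (A + B) := by rw [mul_add, hcancel]
  have hna : n * ao ≤ (1 + 2 * ε) * A := by
    nlinarith [mul_nonneg (le_of_lt hε0) hA0, mul_nonneg (mul_nonneg (le_of_lt hε0) (le_of_lt hε0)) hA0]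
  have hsum : ∑ p ∈ C, (dist p ℓo + ρo) = (∑ p ∈ C, dist p ℓo) + n * ρo := by
    rw [Finset.sum_add_distrib, Finset.sum_const, nsmul_eq_mul]
  rw [hsum]
  linarith

/-- Existence of a good center-removal set `S₀`: given an optimal-type solution `OPT`
with clusters `C_{c*}`, a subset `Ô ⊆ OPT` of nonempty clusters with valid leader/radius
data `(ℓ_{c*}, a_{c*}, ρ_{c*})`, and a map `t` from `OPT − Ô` into `S`, there is
`S₀ ⊆ S` with `|S₀| = |Ô|`, avoiding `t(OPT − Ô)`, such that serving each client by the
best of the surviving centers `S − S₀` and the dummy centers of the balls `B(ℓ_{c*},ρ_{c*})`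
(a nonempty collection of options for every client) costs at most
`Σ_{c*∈Ô} ((3+5ε)·Σ_{p∈C_{c*}} d(p,c*) + ε·Σ_{p∈C_{c*}} d(p,S))
  + Σ_{c*∈OPT−Ô} Σ_{p∈C_{c*}} d(p,t(c*))`. -/
theorem exists_center_removal_set {X : Type*} [MetricSpace X] [DecidableEq X]
    (D F : Finset X) (hD : D.Nonempty) (hF : F.Nonempty)
    (ε : ℝ) (hε0 : 0 < ε) (hε1 : ε ≤ 1 / 2)
    (k : ℕ) (hk1 : 1 ≤ k) (hkF : k ≤ F.card)
    (OPT : Finset X) (hOPTF : OPT ⊆ F) (hOPTcard : OPT.card = k)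
    (σ : X → X) (hσ : ∀ p ∈ D, σ p ∈ OPT ∧ dist p (σ p) = dS p OPT)
    (S : Finset X) (hSF : S ⊆ F) (hScard : S.card = k) (hSne : S.Nonempty)
    (Ohat : Finset X) (hOhat : Ohat ⊆ OPT)
    (hOhatne : ∀ o ∈ Ohat, (cluster D σ o).Nonempty)
    (t : X → X) (ht : ∀ o ∈ OPT \ Ohat, t o ∈ S)
    (ℓ : X → X) (hℓD : ∀ o ∈ Ohat, ℓ o ∈ D)
    (a ρ : X → ℝ)
    (hball : ∀ o ∈ Ohat,
      dist (ℓ o) o ≤ a o ∧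
      (1 - ε) * ((cluster D σ o).card : ℝ) * a o ≤ (∑ p ∈ cluster D σ o, dist p o) ∧
      a o ≤ ρ o ∧
      ρ o ≤ a o + (ε / ((cluster D σ o).card : ℝ))
        * ∑ p ∈ cluster D σ o, (dist p o + dS p S)) :
    ∃ S₀ ⊆ S, S₀.card = Ohat.card ∧
      (∀ o ∈ OPT \ Ohat, t o ∉ S₀) ∧
      (∀ p ∈ D, σ p ∈ Ohat ∨ t (σ p) ∈ S \ S₀) ∧
      ∑ p ∈ D, sInf
          ((((S \ S₀).image (fun c => dist p c)
            ∪ Ohat.image (fun o => dist p (ℓ o) + ρ o) : Finset ℝ)) : Set ℝ)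
        ≤ (∑ o ∈ Ohat, ((3 + 5 * ε) * (∑ p ∈ cluster D σ o, dist p o)
              + ε * ∑ p ∈ cluster D σ o, dS p S))
          + ∑ o ∈ OPT \ Ohat, ∑ p ∈ cluster D σ o, dist p (t o) := by
  classical
  set T : Finset X := (OPT \ Ohat).image t with hT
  have hOhatk : Ohat.card ≤ k := hOPTcard ▸ Finset.card_le_card hOhat
  have hTcard : T.card ≤ k - Ohat.card := by
    calc T.card ≤ (OPT \ Ohat).card := Finset.card_image_le
      _ = k - Ohat.card := by rw [Finset.card_sdiff_of_subset hOhat, hOPTcard]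
  have hcard : Ohat.card ≤ (S \ T).card := by
    have h1 := Finset.le_card_sdiff T S
    omega
  obtain ⟨S₀, hS₀sub, hS₀card⟩ := Finset.exists_subset_card_eq hcard
  have hS₀S : S₀ ⊆ S := fun x hx => (Finset.mem_sdiff.1 (hS₀sub hx)).1
  have htnot : ∀ o ∈ OPT \ Ohat, t o ∉ S₀ := by
    intro o ho hmem
    exact (Finset.mem_sdiff.1 (hS₀sub hmem)).2 (Finset.mem_image_of_mem t ho)
  have hopt : ∀ p ∈ D, σ p ∈ Ohat ∨ t (σ p) ∈ S \ S₀ := by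
    intro p hp
    by_cases h : σ p ∈ Ohat
    · exact Or.inl h
    · right
      have hmem : σ p ∈ OPT \ Ohat := Finset.mem_sdiff.2 ⟨(hσ p hp).1, h⟩
      exact Finset.mem_sdiff.2 ⟨ht _ hmem, htnot _ hmem⟩
  refine ⟨S₀, hS₀S, hS₀card, htnot, hopt, ?_⟩
  set f : X → ℝ := fun p =>
    if σ p ∈ Ohat then dist p (ℓ (σ p)) + ρ (σ p) else dist p (t (σ p)) with hf
  have hstep1 : ∑ p ∈ D, sInf
      ((((S \ S₀).image (fun c => dist p c)
        ∪ Ohat.image (fun o => dist p (ℓ o) + ρ o) : Finset ℝ)) : Set ℝ)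
      ≤ ∑ p ∈ D, f p := by
    refine Finset.sum_le_sum fun p hp => ?_
    have hbdd : BddBelow ((((S \ S₀).image (fun c => dist p c)
        ∪ Ohat.image (fun o => dist p (ℓ o) + ρ o) : Finset ℝ)) : Set ℝ) :=
      (Finset.finite_toSet _).bddBelow
    by_cases h : σ p ∈ Ohat
    · have hmem : f p ∈ (((S \ S₀).image (fun c => dist p c)
          ∪ Ohat.image (fun o => dist p (ℓ o) + ρ o) : Finset ℝ) : Set ℝ) := by
        simp only [hf, if_pos h, Finset.coe_union, Set.mem_union, Finset.mem_coe,
          Finset.mem_image]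
        exact Or.inr ⟨σ p, h, rfl⟩
      exact csInf_le hbdd hmem
    · have hts : t (σ p) ∈ S \ S₀ := (hopt p hp).resolve_left h
      have hmem : f p ∈ (((S \ S₀).image (fun c => dist p c)
          ∪ Ohat.image (fun o => dist p (ℓ o) + ρ o) : Finset ℝ) : Set ℝ) := by
        simp only [hf, if_neg h, Finset.coe_union, Set.mem_union, Finset.mem_coe,
          Finset.mem_image]
        exact Or.inl ⟨t (σ p), hts, rfl⟩
      exact csInf_le hbdd hmem
  have hfiber : ∑ o ∈ OPT, ∑ p ∈ cluster D σ o, f p = ∑ p ∈ D, f p :=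
    Finset.sum_fiberwise_of_maps_to (fun p hp => (hσ p hp).1) f
  have hsplit : ∑ o ∈ OPT, ∑ p ∈ cluster D σ o, f p
      = (∑ o ∈ OPT \ Ohat, ∑ p ∈ cluster D σ o, f p)
        + ∑ o ∈ Ohat, ∑ p ∈ cluster D σ o, f p :=
    (Finset.sum_sdiff hOhat).symm
  have hin : ∀ o ∈ Ohat, ∑ p ∈ cluster D σ o, f p
      ≤ (3 + 5 * ε) * (∑ p ∈ cluster D σ o, dist p o)
        + ε * ∑ p ∈ cluster D σ o, dS p S := by
    intro o ho
    have hval : ∀ p ∈ cluster D σ o, f p = dist p (ℓ o) + ρ o := by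
      intro p hp
      have hσp : σ p = o := (Finset.mem_filter.1 hp).2
      simp [hf, hσp, ho]
    rw [Finset.sum_congr rfl hval]
    obtain ⟨h1, h2, h3, h4⟩ := hball o ho
    exact cluster_ball_bound S _ (hOhatne o ho) o (ℓ o) (a o) (ρ o) ε hε0 hε1 h1 h2 h3 h4
  have hout : ∀ o ∈ OPT \ Ohat, ∑ p ∈ cluster D σ o, f p
      = ∑ p ∈ cluster D σ o, dist p (t o) := by
    intro o ho
    refine Finset.sum_congr rfl fun p hp => ?_
    have hσp : σ p = o := (Finset.mem_filter.1 hp).2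
    have hno : o ∉ Ohat := (Finset.mem_sdiff.1 ho).2
    simp [hf, hσp, hno]
  refine le_trans hstep1 ?_
  calc ∑ p ∈ D, f p
      = (∑ o ∈ OPT \ Ohat, ∑ p ∈ cluster D σ o, f p)
        + ∑ o ∈ Ohat, ∑ p ∈ cluster D σ o, f p := by rw [← hfiber, hsplit]
    _ ≤ (∑ o ∈ OPT \ Ohat, ∑ p ∈ cluster D σ o, dist p (t o))
        + ∑ o ∈ Ohat, ((3 + 5 * ε) * (∑ p ∈ cluster D σ o, dist p o)
              + ε * ∑ p ∈ cluster D σ o, dS p S) :=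
        add_le_add (le_of_eq (Finset.sum_congr rfl hout)) (Finset.sum_le_sum hin)
    _ = (∑ o ∈ Ohat, ((3 + 5 * ε) * (∑ p ∈ cluster D σ o, dist p o)
              + ε * ∑ p ∈ cluster D σ o, dS p S))
          + ∑ o ∈ OPT \ Ohat, ∑ p ∈ cluster D σ o, dist p (t o) := add_comm _ _
end

section
/- Closing the center of a hit cluster is cheap: let C ⊆ D be finite, let c be a point, t ≥ 0, and let X ⊆ F be nonempty. Suppose there exists p₀ ∈ C with d(p₀,c) ≤ t and d(p₀,X) ≤ d(p₀,c). Then Σ_{p∈C} d(p,X) ≤ Σ_{p∈C} min( d(p,c), d(p,X) ) + 2·t·|C|. -/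
open Finset

/-- Closing the center of a hit cluster is cheap: if some point `p₀` of the core of the
cluster `C` with center `c` and core radius `t` is at least as close to `X` as to `c`,
then `Σ_{p∈C} d(p,X) ≤ Σ_{p∈C} min(d(p,c), d(p,X)) + 2·t·|C|`. -/
theorem hit_cluster_removal_bound {X : Type*} [MetricSpace X]
    (D F : Finset X)
    (C : Finset X) (hCD : C ⊆ D)
    (c : X) (t : ℝ) (ht : 0 ≤ t)
    (Xs : Finset X) (hXsF : Xs ⊆ F) (hXne : Xs.Nonempty)
    (p₀ : X) (hp₀C : p₀ ∈ C) (hp₀c : dist p₀ c ≤ t) (hp₀X : dS p₀ Xs ≤ dist p₀ c) :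
    ∑ p ∈ C, dS p Xs
      ≤ (∑ p ∈ C, min (dist p c) (dS p Xs)) + 2 * t * C.card := by
  have htri : ∀ p q : X, dS p Xs ≤ dist p q + dS q Xs := by
    intro p q
    simp only [dS, dif_pos hXne]
    obtain ⟨x, hx, hxe⟩ := Finset.exists_mem_eq_inf' hXne (fun c => dist q c)
    rw [hxe]
    exact le_trans (Finset.inf'_le _ hx) (dist_triangle p q x)
  have key : ∀ p ∈ C, dS p Xs ≤ min (dist p c) (dS p Xs) + 2 * t := by
    intro p _
    rcases le_total (dS p Xs) (dist p c) with h | h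
    · rw [min_eq_right h]; linarith
    · have h1 : dS p Xs ≤ dist p c + 2 * t := by
        have := htri p p₀
        have hd : dist p p₀ ≤ dist p c + dist c p₀ := dist_triangle p c p₀
        rw [dist_comm c p₀] at hd
        nlinarith
      calc dS p Xs ≤ dist p c + 2 * t := h1
        _ = min (dist p c) (dS p Xs) + 2 * t := by rw [min_eq_left h]
  calc ∑ p ∈ C, dS p Xs ≤ ∑ p ∈ C, (min (dist p c) (dS p Xs) + 2 * t) :=
        Finset.sum_le_sum key
    _ = (∑ p ∈ C, min (dist p c) (dS p Xs)) + 2 * t * C.card := by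
        rw [Finset.sum_add_distrib, Finset.sum_const, nsmul_eq_mul, mul_comm]
end

section
/- Closing the center of a concentrated cluster loses at most a (1+2ε) factor plus a small additive term: let ε ∈ (0, 1/2], let C ⊆ D be finite, c a point, t ≥ 0, and X ⊆ F nonempty. Let K := {p ∈ C : d(p,c) ≤ t} and suppose K ≠ ∅ and |K| ≥ (1−ε)·|C|. Let A := {p ∈ C − K : d(p,c) ≤ d(p,X)} and B := (C − K) − A. Then Σ_{p∈C} d(p,X) ≤ (1+2ε)·( Σ_{p∈K∪B} d(p,X) + Σ_{p∈A} d(p,c) ) + ε·|C|·t. -/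
open Finset

lemma dS_le_dist_add {X : Type*} [MetricSpace X] (p q : X) (S : Finset X)
    (hS : S.Nonempty) : dS p S ≤ dist p q + dS q S := by
  obtain ⟨c, hc, hceq⟩ := S.exists_mem_eq_inf' hS (fun c => dist q c)
  unfold dS
  rw [dif_pos hS, dif_pos hS, hceq]
  calc S.inf' hS (fun c => dist p c) ≤ dist p c := Finset.inf'_le _ hc
    _ ≤ dist p q + dist q c := dist_triangle p q c

/-- Closing the center of a concentrated cluster loses at most a `(1+2ε)` factor plus a
small additive term: with core `K` of radius `t` containing a `(1−ε)` fraction of `C`,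
`A` the non-core points closer to `c` than to `X`, and `B` the remaining non-core points,
`Σ_{p∈C} d(p,X) ≤ (1+2ε)·(Σ_{p∈K∪B} d(p,X) + Σ_{p∈A} d(p,c)) + ε·|C|·t`. -/
theorem concentrated_cluster_removal_bound {X : Type*} [MetricSpace X] [DecidableEq X]
    (D F : Finset X)
    (ε : ℝ) (hε0 : 0 < ε) (hε1 : ε ≤ 1 / 2)
    (C : Finset X) (hCD : C ⊆ D)
    (c : X) (t : ℝ) (ht : 0 ≤ t)
    (Xs : Finset X) (hXsF : Xs ⊆ F) (hXne : Xs.Nonempty)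
    (K A B : Finset X)
    (hK : K = C.filter (fun p => dist p c ≤ t))
    (hKne : K.Nonempty)
    (hconc : (1 - ε) * (C.card : ℝ) ≤ (K.card : ℝ))
    (hA : A = (C \ K).filter (fun p => dist p c ≤ dS p Xs))
    (hB : B = (C \ K) \ A) :
    ∑ p ∈ C, dS p Xs
      ≤ (1 + 2 * ε) * ((∑ p ∈ K ∪ B, dS p Xs) + ∑ p ∈ A, dist p c)
        + ε * (C.card : ℝ) * t := by
  have hKC : K ⊆ C := by rw [hK]; exact filter_subset _ _
  have hACK : A ⊆ C \ K := by rw [hA]; exact filter_subset _ _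
  have hdisj : Disjoint (K ∪ B) A := by
    apply Finset.disjoint_union_left.mpr
    constructor
    · exact Finset.disjoint_sdiff.mono_right hACK
    · rw [hB]; exact Finset.sdiff_disjoint
  have hCeq : C = (K ∪ B) ∪ A := by
    rw [hB, Finset.union_assoc, Finset.sdiff_union_of_subset hACK,
      Finset.union_sdiff_of_subset hKC]
  -- minimizer on K
  obtain ⟨q, hqK, hqmin⟩ := K.exists_min_image (fun r => dS r Xs) hKne
  have hqt : dist q c ≤ t := by
    rw [hK] at hqK; exact (Finset.mem_filter.mp hqK).2
  -- pointwise bound on A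
  have hApt : ∀ p ∈ A, dS p Xs ≤ dist p c + t + dS q Xs := by
    intro p hp
    calc dS p Xs ≤ dist p q + dS q Xs := dS_le_dist_add p q Xs hXne
      _ ≤ (dist p c + dist c q) + dS q Xs := by
          gcongr; exact dist_triangle p c q
      _ ≤ dist p c + t + dS q Xs := by
          rw [dist_comm c q] at *; linarith
  have hsumA : ∑ p ∈ A, dS p Xs ≤
      (∑ p ∈ A, dist p c) + (A.card : ℝ) * (t + dS q Xs) := by
    calc ∑ p ∈ A, dS p Xs ≤ ∑ p ∈ A, (dist p c + (t + dS q Xs)) := by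
          apply Finset.sum_le_sum; intro p hp; linarith [hApt p hp]
      _ = (∑ p ∈ A, dist p c) + (A.card : ℝ) * (t + dS q Xs) := by
          rw [Finset.sum_add_distrib, Finset.sum_const, nsmul_eq_mul]
  -- card bounds
  have hcardA : (A.card : ℝ) ≤ ε * (C.card : ℝ) := by
    have h1 : A.card ≤ (C \ K).card := Finset.card_le_card hACK
    have h2 : (C \ K).card = C.card - K.card := Finset.card_sdiff_of_subset hKC
    have h3 : K.card ≤ C.card := Finset.card_le_card hKC
    have : (A.card : ℝ) ≤ (C.card : ℝ) - (K.card : ℝ) := by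
      rw [h2] at h1
      push_cast [Nat.cast_sub h3] at *
      exact_mod_cast h1
    nlinarith
  have hmq : 0 ≤ dS q Xs := dS_nonneg q Xs
  have hKm : (K.card : ℝ) * dS q Xs ≤ ∑ p ∈ K, dS p Xs := by
    have := Finset.card_nsmul_le_sum K (fun r => dS r Xs) (dS q Xs) hqmin
    rwa [nsmul_eq_mul] at this
  have hcardC : 0 ≤ (C.card : ℝ) := Nat.cast_nonneg _
  have hAm : (A.card : ℝ) * dS q Xs ≤ 2 * ε * ∑ p ∈ K, dS p Xs := by
    have h2K : ε * (C.card : ℝ) ≤ 2 * ε * (K.card : ℝ) := by nlinarith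
    calc (A.card : ℝ) * dS q Xs ≤ 2 * ε * (K.card : ℝ) * dS q Xs := by
          apply mul_le_mul_of_nonneg_right _ hmq
          exact le_trans hcardA h2K
      _ ≤ 2 * ε * ∑ p ∈ K, dS p Xs := by
          rw [mul_assoc]; exact mul_le_mul_of_nonneg_left hKm (by positivity)
  have hKB : ∑ p ∈ K, dS p Xs ≤ ∑ p ∈ K ∪ B, dS p Xs :=
    Finset.sum_le_sum_of_subset_of_nonneg Finset.subset_union_left
      (fun p _ _ => dS_nonneg p Xs)
  have hsplit : ∑ p ∈ C, dS p Xs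
      = (∑ p ∈ K ∪ B, dS p Xs) + ∑ p ∈ A, dS p Xs := by
    rw [hCeq]; exact Finset.sum_union hdisj
  have hAdist : 0 ≤ ∑ p ∈ A, dist p c :=
    Finset.sum_nonneg (fun p _ => dist_nonneg)
  have hAt : (A.card : ℝ) * t ≤ ε * (C.card : ℝ) * t :=
    mul_le_mul_of_nonneg_right hcardA ht
  have hKBnn : 0 ≤ ∑ p ∈ K ∪ B, dS p Xs :=
    Finset.sum_nonneg (fun p _ => dS_nonneg p Xs)
  rw [hsplit]
  have : (A.card : ℝ) * (t + dS q Xs) = (A.card : ℝ) * t + (A.card : ℝ) * dS q Xs := by ring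
  nlinarith [hsumA, hAm, hKB, hAt]
end
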